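/- arXiv:2507.10453 — 6 statements merged into one kernel-verified Lean document; each statement's English description precedes it below -/
import Mathlib

section
/- For every positive integer k, the complete bipartite graph K_{2,k^2} is not degree-truncated k-choosable. That is, there exists a list assignment L with |L(v)| ≥ min{k, deg(v)} for every vertex v such that K_{2,k^2} admits no proper L-colouring. -/
/-- The degree of a vertex: the number of its neighbours. -/
noncomputable def deg {V : Type*} (G : SimpleGraph V) (v : V) : ℕ :=
  (G.neighborSet v).ncard

lemma deg_inr {k : ℕ} (m : Fin (k ^ 2)) :
    deg (completeBipartiteGraph (Fin 2) (Fin (k ^ 2))) (Sum.inr m) = 2 := by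
  have h : (completeBipartiteGraph (Fin 2) (Fin (k ^ 2))).neighborSet (Sum.inr m) =
      {Sum.inl 0, Sum.inl 1} := by
    ext u
    cases u with
    | inl i => fin_cases i <;> simp [completeBipartiteGraph]
    | inr j => simp [completeBipartiteGraph]
  rw [deg, h, Set.ncard_pair (by simp [Fin.ext_iff])]

/-- For every positive integer `k`, the complete bipartite graph `K_{2,k²}` is not
degree-truncated `k`-choosable: there is a list assignment `L` with
`|L(v)| ≥ min (deg v) k` for every vertex admitting no proper `L`-colouring. -/
theorem stmt_0 (k : ℕ) (hk : 1 ≤ k) :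
    ∃ L : (Fin 2 ⊕ Fin (k ^ 2)) → Finset ℕ,
      (∀ v, min (deg (completeBipartiteGraph (Fin 2) (Fin (k ^ 2))) v) k ≤ (L v).card) ∧
      ¬ ∃ φ : (Fin 2 ⊕ Fin (k ^ 2)) → ℕ,
          (∀ v, φ v ∈ L v) ∧
          ∀ u v, (completeBipartiteGraph (Fin 2) (Fin (k ^ 2))).Adj u v → φ u ≠ φ v := by
  refine ⟨Sum.elim (fun i => if i = 0 then Finset.range k else Finset.Ico k (2 * k))
      (fun m => {(m : ℕ) / k, k + (m : ℕ) % k}), ?_, ?_⟩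
  · intro v
    cases v with
    | inl i =>
      have : min (deg (completeBipartiteGraph (Fin 2) (Fin (k ^ 2))) (Sum.inl i)) k ≤ k :=
        min_le_right _ _
      refine this.trans ?_
      by_cases h : i = 0 <;> simp [h, Nat.card_Ico] <;> omega
    | inr m =>
      rw [deg_inr]
      have hne : (m : ℕ) / k ≠ k + (m : ℕ) % k := by
        have : (m : ℕ) < k ^ 2 := m.2
        have : (m : ℕ) / k < k := Nat.div_lt_of_lt_mul (by nlinarith)
        omega
      simp [Finset.card_insert_of_notMem, hne]
  · rintro ⟨φ, hmem, hprop⟩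
    have ha := hmem (Sum.inl 0)
    have hb := hmem (Sum.inl 1)
    simp at ha hb
    set a := φ (Sum.inl 0) with hadef
    set b := φ (Sum.inl 1) with hbdef
    have hm : a * k + (b - k) < k ^ 2 := by
      calc a * k + (b - k) < a * k + k := by omega
        _ = (a + 1) * k := by ring
        _ ≤ k * k := Nat.mul_le_mul_right k ha
        _ = k ^ 2 := (sq k).symm
    set m : Fin (k ^ 2) := ⟨a * k + (b - k), hm⟩ with hmdef
    have hdiv : (m : ℕ) / k = a := by
      simp only [hmdef]
      rw [mul_comm, Nat.mul_add_div (by omega), Nat.div_eq_of_lt (by omega)]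
      omega
    have hmod : k + (m : ℕ) % k = b := by
      simp only [hmdef]
      rw [mul_comm, Nat.mul_add_mod, Nat.mod_eq_of_lt (by omega)]
      omega
    have hc := hmem (Sum.inr m)
    simp only [Sum.elim_inr, hdiv, hmod, Finset.mem_insert, Finset.mem_singleton] at hc
    have h0 : (completeBipartiteGraph (Fin 2) (Fin (k ^ 2))).Adj (Sum.inl 0) (Sum.inr m) := by
      simp [completeBipartiteGraph]
    have h1 : (completeBipartiteGraph (Fin 2) (Fin (k ^ 2))).Adj (Sum.inl 1) (Sum.inr m) := by
      simp [completeBipartiteGraph]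
    rcases hc with h | h
    · exact hprop _ _ h0 h.symm
    · exact hprop _ _ h1 h.symm
end

section
/- Let H_1 be the graph on vertices {u_1, v_1, w_1, w_2, w_3, w_4} where {u_1, v_1, w_3, w_4} induces K_4, and w_1, w_2 are each adjacent to both u_1 and v_1 and to each other (so {u_1, v_1, w_1, w_2} also induces K_4). With lists L(u_1) = L(v_1) = {1,2,3,4,5}, L(w_1) = L(w_2) = {1,2,3}, L(w_3) = L(w_4) = {3,4,5}, every proper L-colouring φ of H_1 satisfies φ(u_1) ∈ {1,2} or φ(v_1) ∈ {1,2}. -/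
/-- The graph `H₁` on vertices `0 = u₁, 1 = v₁, 2 = w₁, 3 = w₂, 4 = w₃, 5 = w₄`:
`{u₁, v₁, w₃, w₄}` and `{u₁, v₁, w₁, w₂}` each induce a `K₄`, with no other edges. -/
def H1 : SimpleGraph (Fin 6) :=
  SimpleGraph.fromRel (fun i j =>
    (i ∈ ({0, 1, 4, 5} : Finset (Fin 6)) ∧ j ∈ ({0, 1, 4, 5} : Finset (Fin 6))) ∨
    (i ∈ ({0, 1, 2, 3} : Finset (Fin 6)) ∧ j ∈ ({0, 1, 2, 3} : Finset (Fin 6))))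

/-- The list assignment: `L(u₁) = L(v₁) = {1,…,5}`, `L(w₁) = L(w₂) = {1,2,3}`,
`L(w₃) = L(w₄) = {3,4,5}`. -/
def L1 : Fin 6 → Finset ℕ :=
  ![{1, 2, 3, 4, 5}, {1, 2, 3, 4, 5}, {1, 2, 3}, {1, 2, 3}, {3, 4, 5}, {3, 4, 5}]

/-- Every proper `L`-colouring `φ` of `H₁` satisfies `φ(u₁) ∈ {1,2}` or `φ(v₁) ∈ {1,2}`. -/
theorem stmt_2 (φ : Fin 6 → ℕ) (hmem : ∀ v, φ v ∈ L1 v)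
    (hproper : ∀ u v, H1.Adj u v → φ u ≠ φ v) :
    φ 0 ∈ ({1, 2} : Finset ℕ) ∨ φ 1 ∈ ({1, 2} : Finset ℕ) := by
  have h0 := hmem 0
  have h1 := hmem 1
  have h4 := hmem 4
  have h5 : φ 5 ∈ ({3, 4, 5} : Finset ℕ) := hmem 5
  have a01 := hproper 0 1 (by simp [H1, SimpleGraph.fromRel_adj])
  have a04 := hproper 0 4 (by simp [H1, SimpleGraph.fromRel_adj])
  have a05 := hproper 0 5 (by simp [H1, SimpleGraph.fromRel_adj])
  have a14 := hproper 1 4 (by simp [H1, SimpleGraph.fromRel_adj])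
  have a15 := hproper 1 5 (by simp [H1, SimpleGraph.fromRel_adj])
  have a45 := hproper 4 5 (by simp [H1, SimpleGraph.fromRel_adj])
  simp [L1, Matrix.cons_val_succ, Finset.mem_insert] at h0 h1 h4 h5 ⊢
  omega
end

section
/- Let G be a connected graph, let (L,M) be a cover of G with |L(v)| ≥ deg_G(v) for all v, and suppose it is not the case that (|L(v)| = deg_G(v) for every v and G is a GDP-tree). Then G has an (L,M)-colouring. -/
/-- `B` induces a connected subgraph without cut vertices when the deletion of any of
its vertices leaves the induced subgraph preconnected. -/
def NoCutVertex {V : Type*} (G : SimpleGraph V) (B : Set V) : Prop :=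
  ∀ v ∈ B, (G.induce (B \ {v})).Preconnected

/-- A block: a maximal set of vertices inducing a connected subgraph without cut
vertices. -/
def IsBlock {V : Type*} (G : SimpleGraph V) (B : Set V) : Prop :=
  (G.induce B).Connected ∧ NoCutVertex G B ∧
    ∀ B' : Set V, B ⊆ B' → (G.induce B').Connected → NoCutVertex G B' → B' = B

/-- `B` induces a complete subgraph. -/
def IsCompleteSet {V : Type*} (G : SimpleGraph V) (B : Set V) : Prop :=
  ∀ u ∈ B, ∀ v ∈ B, u ≠ v → G.Adj u v

/-- `B` induces a cycle: a connected 2-regular subgraph on at least 3 vertices. -/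
noncomputable def IsCycleSet {V : Type*} (G : SimpleGraph V) (B : Set V) : Prop :=
  (G.induce B).Connected ∧ 3 ≤ B.ncard ∧ ∀ v ∈ B, {u ∈ B | G.Adj v u}.ncard = 2

/-- A GDP-tree: a connected graph all of whose blocks are complete graphs or cycles. -/
noncomputable def IsGDPTree {V : Type*} (G : SimpleGraph V) : Prop :=
  G.Connected ∧ ∀ B : Set V, IsBlock G B → IsCompleteSet G B ∨ IsCycleSet G B
/-- A cover `(L, M)` of a graph `G`: each vertex `v` gets a set `L v` of colours
(colours of distinct vertices are regarded as distinct, being indexed by the vertex),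
and each edge `uv` carries a matching `M u v` between `L u` and `L v`. -/
structure Cover {V : Type*} (G : SimpleGraph V) where
  L : V → Finset ℕ
  M : V → V → ℕ → ℕ → Prop
  symm : ∀ u v a b, M u v a b → M v u b a
  mem : ∀ u v a b, M u v a b → a ∈ L u ∧ b ∈ L v
  matching_right : ∀ u v a b b', M u v a b → M u v a b' → b = b'
  matching_left : ∀ u v a a' b, M u v a b → M u v a' b → a = a'

/-- An `(L, M)`-colouring: each vertex receives a colour from its list so that along
each edge the two chosen colours are not matched. -/
def Cover.IsColouring {V : Type*} {G : SimpleGraph V} (C : Cover G) (φ : V → ℕ) : Prop :=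
  (∀ v, φ v ∈ C.L v) ∧ ∀ u v, G.Adj u v → ¬ C.M u v (φ u) (φ v)

/-!
If some vertex has more colours than its degree, colour greedily in order of decreasing
distance from it: every other vertex still has an uncoloured neighbour when its turn comes.
Otherwise the lists are tight and some block `B` is neither complete nor a cycle. At a cut
vertex `v`, colour everything outside the component of `G - v` containing `B` greedily towards
`v`, and recurse on that component together with `v`, using the colours left over at `v`.

In the `2`-connected case, either some colour of a vertex `u` has no partner at a neighbour
`w`, and colouring `u` with it leaves `w` a spare colour, or all matchings along edges are
perfect, so the graph is `d`-regular with `d ≥ 3`. Then Lovász's lemma gives non-adjacent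
neighbours `b, c` of a vertex `a` such that `G - {b, c}` is connected, and colouring `b` and `c`
by the partners of a single colour of `a` leaves `a` a spare colour.
-/

open Finset Relation
open scoped Classical

lemma Finset.mem_sdiff_pair {α : Type*} [DecidableEq α] {s : Finset α} {a x y : α} :
    a ∈ s \ {x, y} ↔ a ∈ s ∧ a ≠ x ∧ a ≠ y := by
  simp [and_comm]

/-! ### Reachability inside a set of vertices -/

namespace SimpleGraph

variable {V : Type*} (G : SimpleGraph V)

/-- The start `u` need not lie in `A`. -/
def ReachWithin (A : Set V) : V → V → Prop :=
  ReflTransGen fun a b => b ∈ A ∧ G.Adj a b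

def PreconnectedOn (A : Set V) : Prop :=
  ∀ u ∈ A, ∀ v ∈ A, G.ReachWithin A u v

def ClosedIn (X A : Set V) : Prop :=
  ∀ a ∈ X, ∀ b ∈ A, G.Adj a b → b ∈ X

noncomputable def degreeIn (S : Finset V) (v : V) : ℕ :=
  #{w ∈ S | G.Adj v w}

variable {G}

namespace ReachWithin

variable {A B X : Set V} {u v w : V}

lemma single (hv : v ∈ A) (huv : G.Adj u v) : G.ReachWithin A u v :=
  ReflTransGen.single ⟨hv, huv⟩

lemma tail (h : G.ReachWithin A u v) (hw : w ∈ A) (hvw : G.Adj v w) : G.ReachWithin A u w :=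
  ReflTransGen.tail h ⟨hw, hvw⟩

lemma trans (h₁ : G.ReachWithin A u v) (h₂ : G.ReachWithin A v w) : G.ReachWithin A u w :=
  ReflTransGen.trans h₁ h₂

lemma mono (hAB : A ⊆ B) (h : G.ReachWithin A u v) : G.ReachWithin B u v := by
  induction h with
  | refl => exact .refl
  | tail _ step ih => exact ih.tail (hAB step.1) step.2

lemma mem_of_closedIn (hX : G.ClosedIn X A) (hu : u ∈ X) (h : G.ReachWithin A u v) : v ∈ X := by
  induction h with
  | refl => exact hu
  | tail _ step ih => exact hX _ ih _ step.1 step.2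

lemma mem (hu : u ∈ A) (h : G.ReachWithin A u v) : v ∈ A :=
  h.mem_of_closedIn (fun _ _ _ hb _ => hb) hu

lemma symm (hu : u ∈ A) (h : G.ReachWithin A u v) : G.ReachWithin A v u := by
  induction h with
  | refl => exact .refl
  | tail h step ih => exact ReflTransGen.head ⟨mem hu h, step.2.symm⟩ ih

lemma restrict (hX : G.ClosedIn X A) (hu : u ∈ X) (h : G.ReachWithin A u v) :
    G.ReachWithin X u v := by
  induction h with
  | refl => exact .refl
  | tail h step ih => exact ih.tail (hX _ (mem_of_closedIn hX hu h) _ step.1 step.2) step.2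

lemma exists_boundary (h : G.ReachWithin A u v) (hu : u ∈ X) (hv : v ∉ X) :
    ∃ a ∈ X, ∃ b ∈ A, b ∉ X ∧ G.Adj a b := by
  by_contra! hX
  exact hv (h.mem_of_closedIn (fun a ha b hb hab => by_contra fun hbX => hX a ha b hb hbX hab) hu)

lemma exists_distTwo (h : G.ReachWithin A u v) (huv : u ≠ v) (hnadj : ¬G.Adj u v) :
    ∃ a ∈ A, ∃ c ∈ A, G.Adj u a ∧ G.Adj a c ∧ c ≠ u ∧ ¬G.Adj u c := by
  obtain ⟨a, ha, c, hc, hcX, hac⟩ :=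
    h.exists_boundary (X := {z | z = u ∨ (z ∈ A ∧ G.Adj u z)}) (Or.inl rfl)
      (by rintro (h | ⟨-, h⟩) <;> [exact huv h.symm; exact hnadj h])
  simp only [Set.mem_ofPred_eq, not_or, not_and] at ha hcX
  rcases ha with rfl | ⟨haA, hua⟩
  · exact absurd hac (hcX.2 hc)
  · exact ⟨a, haA, c, hc, hua, hac, hcX.1, fun h => hcX.2 hc h⟩

end ReachWithin

lemma reachable_induce_iff_reachWithin {A : Set V} {u v : V} (hu : u ∈ A) (hv : v ∈ A) :
    (G.induce A).Reachable ⟨u, hu⟩ ⟨v, hv⟩ ↔ G.ReachWithin A u v := by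
  constructor
  · rintro ⟨p⟩
    suffices ∀ (x y : A), (G.induce A).Walk x y → G.ReachWithin A x y from this _ _ p
    intro x y p
    induction p with
    | nil => exact .refl
    | cons h _ ih => exact ReflTransGen.head ⟨Subtype.coe_prop _, h⟩ ih
  · intro h
    induction h with
    | refl => rfl
    | @tail b c h step ih =>
      exact (ih (ReachWithin.mem hu h)).trans
        (Adj.reachable (show (G.induce A).Adj ⟨b, _⟩ ⟨c, _⟩ from step.2))

lemma preconnected_induce_iff_preconnectedOn {A : Set V} :
    (G.induce A).Preconnected ↔ G.PreconnectedOn A :=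
  ⟨fun h _ hu _ hv => (reachable_induce_iff_reachWithin hu hv).1 (h _ _),
    fun h x y => (reachable_induce_iff_reachWithin x.2 y.2).2 (h _ x.2 _ y.2)⟩

lemma connected_induce_iff_preconnectedOn {A : Set V} :
    (G.induce A).Connected ↔ A.Nonempty ∧ G.PreconnectedOn A := by
  rw [connected_iff, preconnected_induce_iff_preconnectedOn, and_comm, Set.nonempty_coe_sort]

lemma preconnectedOn_of_forall_reachWithin {A : Set V} {r : V}
    (h : ∀ z ∈ A, G.ReachWithin A z r) : G.PreconnectedOn A :=
  fun x hx y hy => (h x hx).trans ((h y hy).symm hy)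

/-- Otherwise the vertices of `A - x` not joined to `c` would form a closed part of `A`. -/
lemma PreconnectedOn.erase {A : Finset V} {x c : V} (hA : G.PreconnectedOn ↑A)
    (hc : c ∈ A.erase x) (hnbr : ∀ z ∈ A, G.Adj x z → G.ReachWithin ↑(A.erase x) z c) :
    G.PreconnectedOn ↑(A.erase x) := by
  refine preconnectedOn_of_forall_reachWithin (r := c) fun z hz => ?_
  by_contra hzc
  have hX : G.ClosedIn {z | z ∈ A.erase x ∧ ¬G.ReachWithin ↑(A.erase x) z c} ↑A := by
    rintro a ⟨ha, hac⟩ e he hae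
    by_cases hex : e = x
    · exact absurd (hnbr a (mem_of_mem_erase ha) (hex ▸ hae.symm)) hac
    · have heA : e ∈ A.erase x := mem_erase.2 ⟨hex, he⟩
      exact ⟨heA, fun hec => hac ((ReachWithin.single heA hae).trans hec)⟩
  exact ((hA z (mem_of_mem_erase hz) c (mem_of_mem_erase hc)).mem_of_closedIn hX
    ⟨hz, hzc⟩).2 .refl

section componentIn

variable (G) in
noncomputable def componentIn (A : Finset V) (z : V) : Finset V :=
  {w ∈ A | G.ReachWithin A z w}

variable {A : Finset V} {X : Set V} {z w : V}

lemma mem_componentIn : w ∈ G.componentIn A z ↔ w ∈ A ∧ G.ReachWithin A z w := by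
  simp [componentIn]

lemma componentIn_subset : G.componentIn A z ⊆ A := filter_subset _ _

lemma self_mem_componentIn (hz : z ∈ A) : z ∈ G.componentIn A z :=
  mem_componentIn.2 ⟨hz, .refl⟩

lemma closedIn_componentIn : G.ClosedIn (G.componentIn A z) A := fun _ ha _ hb hab =>
  mem_componentIn.2 ⟨hb, (mem_componentIn.1 ha).2.tail hb hab⟩

lemma reachWithin_componentIn (hz : z ∈ A) (hw : w ∈ G.componentIn A z) :
    G.ReachWithin (G.componentIn A z) z w :=
  (mem_componentIn.1 hw).2.restrict closedIn_componentIn (self_mem_componentIn hz)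

lemma componentIn_subset_of_closedIn (hX : G.ClosedIn X A) (hz : z ∈ X) :
    (G.componentIn A z : Set V) ⊆ X := fun _ hw =>
  (mem_componentIn.1 hw).2.mem_of_closedIn hX hz

lemma notMem_of_mem_componentIn (hX : G.ClosedIn X A) (hz : z ∈ A) (hzX : z ∉ X)
    (hw : w ∈ G.componentIn A z) : w ∉ X := fun hwX =>
  hzX (((mem_componentIn.1 hw).2.symm hz).mem_of_closedIn hX hwX)

end componentIn

section degreeIn

variable {A B : Finset V} {z w : V}

lemma degreeIn_union (h : Disjoint A B) :
    G.degreeIn (A ∪ B) z = G.degreeIn A z + G.degreeIn B z := by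
  simp only [degreeIn, filter_union]
  exact card_union_of_disjoint (disjoint_filter_filter h)

lemma degreeIn_mono (h : A ⊆ B) : G.degreeIn A z ≤ G.degreeIn B z :=
  card_le_card (filter_subset_filter _ h)

lemma degreeIn_lt (h : A ⊆ B) (hw : w ∈ B) (hwA : w ∉ A) (hzw : G.Adj z w) :
    G.degreeIn A z < G.degreeIn B z := by
  refine card_lt_card ⟨filter_subset_filter _ h, fun hsub => hwA ?_⟩
  exact (mem_filter.1 (hsub (mem_filter.2 ⟨hw, hzw⟩))).1

lemma degreeIn_pos (hw : w ∈ A) (hzw : G.Adj z w) : 0 < G.degreeIn A z :=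
  card_pos.2 ⟨w, mem_filter.2 ⟨hw, hzw⟩⟩

end degreeIn

end SimpleGraph

/-! ### Greedy colourings -/

namespace Cover

open SimpleGraph

variable {V : Type*} {G : SimpleGraph V} (C : Cover G)

def IsColouringOn (S : Finset V) (P : V → Finset ℕ) (φ : V → ℕ) : Prop :=
  (∀ v ∈ S, φ v ∈ P v) ∧ ∀ u ∈ S, ∀ w ∈ S, G.Adj u w → ¬C.M u w (φ u) (φ w)

noncomputable def avail (P : V → Finset ℕ) (A : Finset V) (φ : V → ℕ) (z : V) : Finset ℕ :=
  {x ∈ P z | ∀ w ∈ A, G.Adj z w → ¬C.M z w x (φ w)}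

variable {C}

lemma avail_subset {P : V → Finset ℕ} {A : Finset V} {φ : V → ℕ} {z : V} :
    C.avail P A φ z ⊆ P z :=
  filter_subset _ _

/-- Each coloured neighbour excludes at most one colour, as `M` is a matching. -/
lemma card_le_card_avail_add_degreeIn (P : V → Finset ℕ) (A : Finset V) (φ : V → ℕ) (z : V) :
    (P z).card ≤ (C.avail P A φ z).card + G.degreeIn A z := by
  have hexcl : #{x ∈ P z | ¬∀ w ∈ A, G.Adj z w → ¬C.M z w x (φ w)} ≤ G.degreeIn A z := by
    refine card_le_card_of_forall_subsingleton (fun x w => G.Adj z w ∧ C.M z w x (φ w))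
      (fun x hx => ?_) (fun w _ x₁ hx₁ x₂ hx₂ => C.matching_left _ _ _ _ _ hx₁.2.2 hx₂.2.2)
    obtain ⟨w, hw, hzw, hM⟩ := by simpa using (mem_filter.1 hx).2
    exact ⟨w, mem_filter.2 ⟨hw, hzw⟩, hzw, hM⟩
  have := card_filter_add_card_filter_not (s := P z)
    (p := fun x => ∀ w ∈ A, G.Adj z w → ¬C.M z w x (φ w))
  rw [avail]
  omega

lemma degreeIn_le_card_avail {P : V → Finset ℕ} {A B : Finset V} {φ : V → ℕ} {z : V}
    (hAB : Disjoint A B) (hz : G.degreeIn (A ∪ B) z ≤ (P z).card) :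
    G.degreeIn B z ≤ (C.avail P A φ z).card := by
  have := card_le_card_avail_add_degreeIn (C := C) P A φ z
  rw [degreeIn_union hAB] at hz
  omega

namespace IsColouringOn

variable {S A B : Finset V} {P : V → Finset ℕ} {φ ψ : V → ℕ}

lemma piecewise (hφ : C.IsColouringOn A P φ) (hψ : C.IsColouringOn B (C.avail P A φ) ψ)
    (hAB : Disjoint A B) :
    C.IsColouringOn (A ∪ B) P (fun z => if z ∈ A then φ z else ψ z) := by
  have hfree : ∀ u ∈ A, ∀ w ∈ B, G.Adj w u → ¬C.M w u (ψ w) (φ u) := fun u hu w hw hwu =>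
    (mem_filter.1 (hψ.1 w hw)).2 u hu hwu
  have hnA : ∀ w ∈ B, w ∉ A := fun w hw hwA => disjoint_left.1 hAB hwA hw
  refine ⟨fun v hv => ?_, fun u hu w hw huw => ?_⟩
  · by_cases hvA : v ∈ A
    · simpa [hvA] using hφ.1 v hvA
    · simpa [hvA] using avail_subset (hψ.1 v ((mem_union.1 hv).resolve_left hvA))
  rcases mem_union.1 hu with huA | huB <;> rcases mem_union.1 hw with hwA | hwB
  · simpa [huA, hwA] using hφ.2 u huA w hwA huw
  · simpa [huA, hnA w hwB] using fun hM => hfree u huA w hwB huw.symm (C.symm _ _ _ _ hM)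
  · simpa [hnA u huB, hwA] using hfree w hwA u huB huw
  · simpa [hnA u huB, hnA w hwB] using hψ.2 u huB w hwB huw

end IsColouringOn

variable {S T : Finset V} {P : V → Finset ℕ} {r : V}

lemma exists_isColouringOn_insert {φ : V → ℕ} (hφ : C.IsColouringOn T P φ) (hr : r ∉ T)
    (hdeg : G.degreeIn T r < (P r).card) : ∃ ψ, C.IsColouringOn (insert r T) P ψ := by
  obtain ⟨x, hx⟩ : (C.avail P T φ r).Nonempty := by
    have := card_le_card_avail_add_degreeIn (C := C) P T φ r
    exact card_pos.1 (by omega)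
  have hr' : C.IsColouringOn {r} (C.avail P T φ) fun _ => x :=
    ⟨by simpa using hx, by simp⟩
  rw [insert_eq, union_comm]
  exact ⟨_, hφ.piecewise hr' (disjoint_singleton_right.2 hr)⟩

lemma exists_isColouringOn_of_degenerate
    (h : ∀ T ⊆ S, T.Nonempty → ∃ u ∈ T, G.degreeIn (T.erase u) u < (P u).card) :
    ∃ φ, C.IsColouringOn S P φ := by
  induction S using Finset.strongInduction with
  | _ S ih =>
    rcases S.eq_empty_or_nonempty with rfl | hS
    · exact ⟨fun _ => 0, by simp [IsColouringOn]⟩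
    obtain ⟨u, hu, hdeg⟩ := h S subset_rfl hS
    obtain ⟨φ, hφ⟩ := ih (S.erase u) (erase_ssubset hu)
      fun T hT hTne => h T (hT.trans (erase_subset _ _)) hTne
    rw [← insert_erase hu]
    exact exists_isColouringOn_insert hφ (notMem_erase u S) hdeg

lemma exists_isColouringOn_erase (hreach : ∀ z ∈ S, G.ReachWithin S z r)
    (hdeg : ∀ z ∈ S, z ≠ r → G.degreeIn S z ≤ (P z).card) :
    ∃ φ, C.IsColouringOn (S.erase r) P φ := by
  refine exists_isColouringOn_of_degenerate fun T hT ⟨t, ht⟩ => ?_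
  have hTS : T ⊆ S := hT.trans (erase_subset _ _)
  have hrT : r ∉ T := fun h => notMem_erase r S (hT h)
  obtain ⟨u, hu, w, hw, hwT, huw⟩ := (hreach t (hTS ht)).exists_boundary (X := T) ht hrT
  refine ⟨u, hu, lt_of_lt_of_le ?_ (hdeg u (hTS hu) fun h => hrT (h ▸ hu))⟩
  exact degreeIn_lt ((erase_subset _ _).trans hTS) hw (fun h => hwT (mem_of_mem_erase h)) huw

lemma exists_isColouringOn_of_surplus (hreach : ∀ z ∈ S, G.ReachWithin S z r) (hr : r ∈ S)
    (hdeg : ∀ z ∈ S, G.degreeIn S z ≤ (P z).card) (hsur : G.degreeIn S r < (P r).card) :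
    ∃ φ, C.IsColouringOn S P φ := by
  obtain ⟨φ, hφ⟩ := exists_isColouringOn_erase (C := C) hreach fun z hz _ => hdeg z hz
  rw [← insert_erase hr]
  exact exists_isColouringOn_insert hφ (notMem_erase r S)
    (lt_of_le_of_lt (degreeIn_mono (erase_subset _ _)) hsur)

lemma exists_isColouringOn_of_precolouring {W : Finset V} {φ₀ : V → ℕ}
    (hW : C.IsColouringOn W P φ₀) (hWS : W ⊆ S) (hr : r ∈ S \ W)
    (hreach : ∀ z ∈ S \ W, G.ReachWithin ↑(S \ W) z r)
    (hdeg : ∀ z ∈ S, G.degreeIn S z ≤ (P z).card)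
    (hsur : G.degreeIn (S \ W) r < (C.avail P W φ₀ r).card) :
    ∃ φ, C.IsColouringOn S P φ := by
  obtain ⟨ψ, hψ⟩ := exists_isColouringOn_of_surplus (C := C) (P := C.avail P W φ₀) hreach hr
    (fun z hz => degreeIn_le_card_avail disjoint_sdiff
      ((union_sdiff_of_subset hWS).symm ▸ hdeg z (sdiff_subset hz))) hsur
  rw [← union_sdiff_of_subset hWS]
  exact ⟨_, hW.piecewise hψ disjoint_sdiff⟩

end Cover

/-! ### Lovász's lemma -/

namespace SimpleGraph

variable {V : Type*} {G : SimpleGraph V} {S D : Finset V} {b c u w z : V}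

lemma ReachWithin.exists_adj {A : Set V} {u v : V} (h : G.ReachWithin A u v) (huv : u ≠ v) :
    ∃ w ∈ A, G.Adj u w := by
  rcases ReflTransGen.cases_head h with rfl | ⟨w, ⟨hw, huw⟩, -⟩
  · exact absurd rfl huv
  · exact ⟨w, hw, huw⟩

lemma ReachWithin.eq_of_forall_adj {α : Type*} {A : Set V} {u v : V} {f : V → α}
    (hf : ∀ a ∈ A, ∀ b ∈ A, G.Adj a b → f a = f b) (hu : u ∈ A) (h : G.ReachWithin A u v) :
    f u = f v := by
  induction h with
  | refl => rfl
  | tail h step ih => exact ih.trans (hf _ (ReachWithin.mem hu h) _ step.1 step.2)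

variable (G) in
def DistTwo (S : Finset V) (b c : V) : Prop :=
  b ∈ S ∧ c ∈ S ∧ b ≠ c ∧ ¬G.Adj b c ∧ ∃ a ∈ S, G.Adj a b ∧ G.Adj a c

lemma DistTwo.symm (h : G.DistTwo S b c) : G.DistTwo S c b := by
  obtain ⟨hb, hc, hbc, hnadj, a, ha, hab, hac⟩ := h
  exact ⟨hc, hb, hbc.symm, fun h => hnadj h.symm, a, ha, hac, hab⟩

variable (G) in
/-- A union of some, but not all, components of `S - {b, c}`. -/
structure IsFragment (S : Finset V) (b c : V) (D : Finset V) : Prop where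
  distTwo : G.DistTwo S b c
  nonempty : D.Nonempty
  subset : D ⊆ S \ {b, c}
  exists_notMem : ∃ y ∈ S \ {b, c}, y ∉ D
  closedIn : G.ClosedIn D ↑(S \ {b, c})

lemma isFragment_componentIn {y : V} (h : G.DistTwo S b c) (hz : z ∈ S \ {b, c})
    (hy : y ∈ S \ {b, c}) (hzy : ¬G.ReachWithin ↑(S \ {b, c}) z y) :
    G.IsFragment S b c (G.componentIn (S \ {b, c}) z) :=
  ⟨h, ⟨z, self_mem_componentIn hz⟩, componentIn_subset,
    ⟨y, hy, fun hy' => hzy (mem_componentIn.1 hy').2⟩, closedIn_componentIn⟩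

namespace IsFragment

lemma symm (hD : G.IsFragment S b c D) : G.IsFragment S c b D := by
  have hbc : ({c, b} : Finset V) = {b, c} := pair_comm c b
  exact ⟨hD.distTwo.symm, hD.nonempty, hbc ▸ hD.subset, hbc ▸ hD.exists_notMem,
    hbc ▸ hD.closedIn⟩

lemma left_mem (hD : G.IsFragment S b c D) : b ∈ S := hD.distTwo.1

lemma right_mem (hD : G.IsFragment S b c D) : c ∈ S := hD.distTwo.2.1

lemma left_notMem (hD : G.IsFragment S b c D) : b ∉ D := fun h =>
  (mem_sdiff_pair.1 (hD.subset h)).2.1 rfl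

lemma right_notMem (hD : G.IsFragment S b c D) : c ∉ D := fun h =>
  (mem_sdiff_pair.1 (hD.subset h)).2.2 rfl

lemma subset_finset (hD : G.IsFragment S b c D) : D ⊆ S := hD.subset.trans sdiff_subset

lemma isFragment_componentIn_of_notMem (hD : G.IsFragment S b c D) (hz : z ∈ S \ {b, c})
    (hzD : z ∉ D) : G.IsFragment S b c (G.componentIn (S \ {b, c}) z) := by
  obtain ⟨x, hx⟩ := hD.nonempty
  exact isFragment_componentIn hD.distTwo hz (hD.subset hx) fun h =>
    hzD ((h.symm hz).mem_of_closedIn hD.closedIn hx)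

lemma isFragment_componentIn_of_mem (hD : G.IsFragment S b c D) (hz : z ∈ D) :
    G.IsFragment S b c (G.componentIn (S \ {b, c}) z) := by
  obtain ⟨y, hy, hyD⟩ := hD.exists_notMem
  exact isFragment_componentIn hD.distTwo (hD.subset hz) hy fun h =>
    hyD (h.mem_of_closedIn hD.closedIn hz)

lemma exists_adj (hD : G.IsFragment S b c D) (hconn : G.PreconnectedOn ↑(S.erase c)) :
    ∃ w ∈ D, G.Adj b w := by
  obtain ⟨x, hx⟩ := hD.nonempty
  obtain ⟨y, hy, hyD⟩ := hD.exists_notMem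
  have hsub : S \ {b, c} ⊆ S.erase c := fun z hz =>
    mem_erase.2 ⟨(mem_sdiff_pair.1 hz).2.2, (mem_sdiff_pair.1 hz).1⟩
  obtain ⟨a, ha, e, he, heD, hae⟩ :=
    (hconn x (hsub (hD.subset hx)) y (hsub hy)).exists_boundary (X := ↑D) hx hyD
  by_cases heb : e = b
  · exact ⟨a, ha, heb ▸ hae.symm⟩
  · have he' := mem_erase.1 he
    exact absurd (hD.closedIn a ha e (mem_sdiff_pair.2 ⟨he'.2, heb, he'.1⟩) hae) heD

/-- The component of `u` in `S \ {b, c}` is a fragment, which `b` sees as `S - c` is connected. -/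
lemma reachWithin_insert_sdiff (hD : G.IsFragment S b c D)
    (hS2 : ∀ v ∈ S, G.PreconnectedOn ↑(S.erase v)) (hu : u ∈ S \ {b, c}) (huD : u ∉ D) :
    G.ReachWithin ↑(insert b ((S \ {b, c}) \ D)) u b := by
  have hK : (G.componentIn (S \ {b, c}) u : Set V) ⊆ ↑(insert b ((S \ {b, c}) \ D)) :=
    fun v hv => mem_insert_of_mem (mem_sdiff.2 ⟨componentIn_subset hv,
      notMem_of_mem_componentIn hD.closedIn hu huD hv⟩)
  obtain ⟨v, hv, hbv⟩ :=
    (hD.isFragment_componentIn_of_notMem hu huD).exists_adj (hS2 c hD.right_mem)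
  exact ((reachWithin_componentIn hu hv).mono hK).tail (mem_insert_self _ _) hbv.symm

lemma reachWithin_sdiff (hD : G.IsFragment S b c D)
    (hS2 : ∀ v ∈ S, G.PreconnectedOn ↑(S.erase v)) (hu : u ∈ S \ D) :
    G.ReachWithin ↑(S \ D) u b := by
  have hsub : ∀ x ∈ S, x ∉ D → (↑(insert x ((S \ {b, c}) \ D)) : Set V) ⊆ ↑(S \ D) :=
    fun x hx hxD v hv => by
      rcases mem_insert.1 hv with rfl | hv
      · exact mem_sdiff.2 ⟨hx, hxD⟩
      · exact mem_sdiff.2 ⟨(mem_sdiff.1 (mem_sdiff.1 hv).1).1, (mem_sdiff.1 hv).2⟩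
  have hreach : ∀ v ∈ S \ {b, c}, v ∉ D → G.ReachWithin ↑(S \ D) v b := fun v hv hvD =>
    (hD.reachWithin_insert_sdiff hS2 hv hvD).mono (hsub b hD.left_mem hD.left_notMem)
  obtain ⟨huS, huD⟩ := mem_sdiff.1 hu
  by_cases hub : u = b
  · exact hub ▸ .refl
  by_cases huc : u = c
  · obtain ⟨y, hy, hyD⟩ := hD.exists_notMem
    have hyc := hD.symm.reachWithin_insert_sdiff hS2 (pair_comm b c ▸ hy) hyD
    rw [pair_comm c b] at hyc
    replace hyc := hyc.mono (hsub c hD.right_mem hD.right_notMem)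
    exact huc ▸ (hyc.symm (mem_sdiff.2 ⟨(mem_sdiff.1 hy).1, hyD⟩)).trans (hreach y hy hyD)
  exact hreach u (mem_sdiff_pair.2 ⟨huS, hub, huc⟩) huD

/-- Otherwise `S - {b, w}` would split off a fragment inside `D - w`, smaller than `D`. -/
lemma not_distTwo_of_minimal (hD : G.IsFragment S b c D)
    (hS2 : ∀ v ∈ S, G.PreconnectedOn ↑(S.erase v))
    (hsep : ∀ b' c', G.DistTwo S b' c' → ¬G.PreconnectedOn ↑(S \ {b', c'}))
    (hmin : ∀ b' c' D', G.IsFragment S b' c' D' → #D ≤ #D') (hw : w ∈ D) :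
    ¬G.DistTwo S b w := by
  intro hbw
  have hwS2 := mem_sdiff_pair.1 (hD.subset hw)
  have hc : c ∈ S \ {b, w} :=
    mem_sdiff_pair.2 ⟨hD.right_mem, hD.distTwo.2.2.1.symm, fun h => hwS2.2.2 h.symm⟩
  have hreach_c : ∀ v ∈ S \ {b, w}, v ∉ D → G.ReachWithin ↑(S \ {b, w}) v c := by
    intro v hv hvD
    by_cases hvc : v = c
    · exact hvc ▸ .refl
    have hv' := mem_sdiff_pair.1 hv
    have h := hD.symm.reachWithin_insert_sdiff hS2 (mem_sdiff_pair.2 ⟨hv'.1, hvc, hv'.2.1⟩) hvD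
    rw [pair_comm c b] at h
    refine h.mono fun x hx => ?_
    rcases mem_insert.1 hx with rfl | hx
    · exact hc
    · have hx' := mem_sdiff.1 hx
      have hx'' := mem_sdiff_pair.1 hx'.1
      exact mem_sdiff_pair.2 ⟨hx''.1, hx''.2.1, fun h => hx'.2 (h ▸ hw)⟩
  obtain ⟨z, hz, hzc⟩ : ∃ z ∈ S \ {b, w}, ¬G.ReachWithin ↑(S \ {b, w}) z c := by
    by_contra! h
    exact hsep b w hbw (preconnectedOn_of_forall_reachWithin h)
  have hKD : G.componentIn (S \ {b, w}) z ⊆ D.erase w := fun v hv => by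
    have hv' := mem_componentIn.1 hv
    refine mem_erase.2 ⟨(mem_sdiff_pair.1 hv'.1).2.2, ?_⟩
    by_contra hvD
    exact hzc (hv'.2.trans (hreach_c v hv'.1 hvD))
  have := card_le_card hKD
  have := hmin _ _ _ (isFragment_componentIn hbw hz hc hzc)
  have := card_erase_of_mem hw
  have := hD.nonempty.card_pos
  omega

lemma preconnectedOn_of_minimal (hD : G.IsFragment S b c D)
    (hmin : ∀ b' c' D', G.IsFragment S b' c' D' → #D ≤ #D') : G.PreconnectedOn ↑D := by
  intro u hu w hw
  have hKD : G.componentIn (S \ {b, c}) u ⊆ D := fun v hv =>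
    componentIn_subset_of_closedIn hD.closedIn hu hv
  rw [← eq_of_subset_of_card_le hKD (hmin _ _ _ (hD.isFragment_componentIn_of_mem hu))] at hw ⊢
  exact reachWithin_componentIn (hD.subset hu) hw

lemma adj_of_minimal (hD : G.IsFragment S b c D)
    (hS2 : ∀ v ∈ S, G.PreconnectedOn ↑(S.erase v))
    (hsep : ∀ b' c', G.DistTwo S b' c' → ¬G.PreconnectedOn ↑(S \ {b', c'}))
    (hmin : ∀ b' c' D', G.IsFragment S b' c' D' → #D ≤ #D') (hw : w ∈ D) : G.Adj b w := by
  by_contra hbw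
  obtain ⟨v, hv, hbv⟩ := hD.exists_adj (hS2 c hD.right_mem)
  have hreach : G.ReachWithin ↑(insert b D) b w :=
    (ReachWithin.single (mem_insert_of_mem hv) hbv).trans
      (((hD.preconnectedOn_of_minimal hmin) v hv w hw).mono fun _ => mem_insert_of_mem)
  obtain ⟨a, ha, x, hx, hba, hax, hxb, hbx⟩ :=
    hreach.exists_distTwo (fun h => hD.left_notMem (h ▸ hw)) hbw
  have hsub : insert b D ⊆ S := insert_subset hD.left_mem hD.subset_finset
  exact hD.not_distTwo_of_minimal hS2 hsep hmin ((mem_insert.1 hx).resolve_left hxb)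
    ⟨hD.left_mem, hsub hx, hxb.symm, hbx, a, hsub ha, hba.symm, hax⟩

lemma adj_of_minimal_of_ne (hD : G.IsFragment S b c D)
    (hS2 : ∀ v ∈ S, G.PreconnectedOn ↑(S.erase v))
    (hsep : ∀ b' c', G.DistTwo S b' c' → ¬G.PreconnectedOn ↑(S \ {b', c'}))
    (hmin : ∀ b' c' D', G.IsFragment S b' c' D' → #D ≤ #D') (hu : u ∈ D) (hw : w ∈ D)
    (huw : u ≠ w) : G.Adj u w := by
  by_contra hnadj
  refine hsep u w ⟨hD.subset_finset hu, hD.subset_finset hw, huw, hnadj, b, hD.left_mem,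
    hD.adj_of_minimal hS2 hsep hmin hu, hD.adj_of_minimal hS2 hsep hmin hw⟩ ?_
  have hb : b ∈ S \ {u, w} := mem_sdiff_pair.2 ⟨hD.left_mem,
    fun h => hD.left_notMem (h ▸ hu), fun h => hD.left_notMem (h ▸ hw)⟩
  refine preconnectedOn_of_forall_reachWithin (r := b) fun x hx => ?_
  by_cases hxD : x ∈ D
  · exact ReachWithin.single hb (hD.adj_of_minimal hS2 hsep hmin hxD).symm
  · refine (hD.reachWithin_sdiff hS2 (mem_sdiff.2 ⟨(mem_sdiff.1 hx).1, hxD⟩)).mono ?_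
    intro y hy
    have hy' := mem_sdiff.1 hy
    exact mem_sdiff_pair.2 ⟨hy'.1, fun h => hy'.2 (h ▸ hu), fun h => hy'.2 (h ▸ hw)⟩

lemma adj_iff_of_minimal (hD : G.IsFragment S b c D)
    (hS2 : ∀ v ∈ S, G.PreconnectedOn ↑(S.erase v))
    (hsep : ∀ b' c', G.DistTwo S b' c' → ¬G.PreconnectedOn ↑(S \ {b', c'}))
    (hmin : ∀ b' c' D', G.IsFragment S b' c' D' → #D ≤ #D') (hw : w ∈ D) (hz : z ∈ S) :
    G.Adj w z ↔ z = b ∨ z = c ∨ (z ∈ D ∧ z ≠ w) := by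
  constructor
  · intro hwz
    by_contra! h
    exact hwz.ne' (h.2.2 (hD.closedIn w hw z (mem_sdiff_pair.2 ⟨hz, h.1, h.2.1⟩) hwz))
  · rintro (rfl | rfl | ⟨hzD, hzw⟩)
    · exact (hD.adj_of_minimal hS2 hsep hmin hw).symm
    · exact (hD.symm.adj_of_minimal hS2 hsep hmin hw).symm
    · exact hD.adj_of_minimal_of_ne hS2 hsep hmin hw hzD hzw.symm

lemma degreeIn_eq_of_minimal (hD : G.IsFragment S b c D)
    (hS2 : ∀ v ∈ S, G.PreconnectedOn ↑(S.erase v))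
    (hsep : ∀ b' c', G.DistTwo S b' c' → ¬G.PreconnectedOn ↑(S \ {b', c'}))
    (hmin : ∀ b' c' D', G.IsFragment S b' c' D' → #D ≤ #D') (hw : w ∈ D) :
    G.degreeIn S w = #D + 1 := by
  have hN : {z ∈ S | G.Adj w z} = insert b (insert c (D.erase w)) := by
    ext z
    simp only [mem_filter, mem_insert, mem_erase]
    constructor
    · rintro ⟨hz, hwz⟩
      have := (hD.adj_iff_of_minimal hS2 hsep hmin hw hz).1 hwz
      tauto
    · intro h
      have hz : z ∈ S := by
        rcases h with rfl | rfl | ⟨-, hz⟩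
        exacts [hD.left_mem, hD.right_mem, hD.subset_finset hz]
      exact ⟨hz, (hD.adj_iff_of_minimal hS2 hsep hmin hw hz).2 (by tauto)⟩
  have hcD : c ∉ D.erase w := fun h => hD.right_notMem (mem_of_mem_erase h)
  have hbD : b ∉ insert c (D.erase w) := by
    rw [mem_insert, not_or]
    exact ⟨hD.distTwo.2.2.1, fun h => hD.left_notMem (mem_of_mem_erase h)⟩
  rw [degreeIn, hN, card_insert_of_notMem hbD, card_insert_of_notMem hcD,
    card_erase_of_mem hw]
  have := hD.nonempty.card_pos
  omega

/-- `D` is a clique joined to both `b` and `c`, so by regularity `b` has a neighbour `u₀`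
outside `D`; then `S - {x, u₀}` is connected for any `x ∈ D`, although `x` and `u₀` are at
distance two through `b`. -/
lemma false_of_minimal {d : ℕ} (hD : G.IsFragment S b c D)
    (hS2 : ∀ v ∈ S, G.PreconnectedOn ↑(S.erase v))
    (hsep : ∀ b' c', G.DistTwo S b' c' → ¬G.PreconnectedOn ↑(S \ {b', c'}))
    (hmin : ∀ b' c' D', G.IsFragment S b' c' D' → #D ≤ #D')
    (hreg : ∀ v ∈ S, G.degreeIn S v = d) (hd : 3 ≤ d) : False := by
  have hbD : ∀ {w}, w ∈ D → G.Adj b w := hD.adj_of_minimal hS2 hsep hmin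
  have hcD : ∀ {w}, w ∈ D → G.Adj c w := hD.symm.adj_of_minimal hS2 hsep hmin
  obtain ⟨x, hx⟩ := hD.nonempty
  have hcard : #D + 1 = d :=
    (hD.degreeIn_eq_of_minimal hS2 hsep hmin hx).symm.trans (hreg x (hD.subset_finset hx))
  obtain ⟨u₀, hu₀, hu₀D⟩ : ∃ u₀ ∈ {z ∈ S | G.Adj b z}, u₀ ∉ D :=
    exists_mem_notMem_of_card_lt_card (by rw [← degreeIn, hreg b hD.left_mem]; omega)
  obtain ⟨hu₀S, hbu₀⟩ := mem_filter.1 hu₀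
  obtain ⟨x₁, hx₁⟩ : (D.erase x).Nonempty := card_pos.1 (by rw [card_erase_of_mem hx]; omega)
  have hx₁D := mem_of_mem_erase hx₁
  have hxu₀ : ¬G.Adj x u₀ := fun h => by
    rcases (hD.adj_iff_of_minimal hS2 hsep hmin hx hu₀S).1 h with rfl | rfl | ⟨h, -⟩
    exacts [hbu₀.ne rfl, hD.distTwo.2.2.2.1 hbu₀, hu₀D h]
  refine hsep x u₀ ⟨hD.subset_finset hx, hu₀S, fun h => hu₀D (h ▸ hx), hxu₀, b, hD.left_mem,
    hbD hx, hbu₀⟩ ?_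
  have hT : S \ {x, u₀} = (S.erase u₀).erase x := by
    ext z
    rw [mem_sdiff_pair, mem_erase, mem_erase]
    tauto
  have hc : c ∈ (S.erase u₀).erase x := mem_erase.2 ⟨fun h => hD.right_notMem (h ▸ hx),
    mem_erase.2 ⟨fun h => hD.distTwo.2.2.2.1 (h ▸ hbu₀), hD.right_mem⟩⟩
  have hx₁T : x₁ ∈ (S.erase u₀).erase x := mem_erase.2 ⟨(mem_erase.1 hx₁).1,
    mem_erase.2 ⟨fun h => hu₀D (h ▸ hx₁D), hD.subset_finset hx₁D⟩⟩
  rw [hT]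
  refine (hS2 u₀ hu₀S).erase hc fun z hz hxz => ?_
  rcases (hD.adj_iff_of_minimal hS2 hsep hmin hx (mem_of_mem_erase hz)).1 hxz with
    rfl | rfl | ⟨hzD, -⟩
  · exact (ReachWithin.single hx₁T (hbD hx₁D)).tail hc (hcD hx₁D).symm
  · exact .refl
  · exact ReachWithin.single hc (hcD hzD).symm

end IsFragment

/-- Lovász's lemma from the proof of Brooks' theorem. -/
theorem exists_distTwo_preconnectedOn_sdiff {d : ℕ} (hS : G.PreconnectedOn ↑S)
    (hS2 : ∀ v ∈ S, G.PreconnectedOn ↑(S.erase v)) (hreg : ∀ v ∈ S, G.degreeIn S v = d)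
    (hd : 3 ≤ d) (hnc : ¬IsCompleteSet G ↑S) :
    ∃ b c, G.DistTwo S b c ∧ G.PreconnectedOn ↑(S \ {b, c}) := by
  by_contra! hsep
  obtain ⟨p, hp, q, hq, hpq, hnpq⟩ : ∃ p ∈ S, ∃ q ∈ S, p ≠ q ∧ ¬G.Adj p q := by
    by_contra! h
    exact hnc h
  obtain ⟨a, ha, c, hc, hpa, hac, hcp, hpc⟩ := (hS p hp q hq).exists_distTwo hpq hnpq
  have hpc2 : G.DistTwo S p c := ⟨hp, hc, hcp.symm, hpc, a, ha, hpa.symm, hac⟩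
  obtain ⟨x, hx, y, hy, hxy⟩ :
      ∃ x ∈ S \ {p, c}, ∃ y ∈ S \ {p, c}, ¬G.ReachWithin ↑(S \ {p, c}) x y := by
    have := hsep p c hpc2
    simp only [PreconnectedOn, not_forall, exists_prop] at this
    exact this
  obtain ⟨⟨b, c, D⟩, hD, hmin⟩ := (measure fun t : V × V × Finset V => #t.2.2).wf.has_min
    {t | G.IsFragment S t.1 t.2.1 t.2.2} ⟨(p, c, _), isFragment_componentIn hpc2 hx hy hxy⟩
  exact hD.false_of_minimal hS2 hsep (fun b' c' D' h => not_lt.1 (hmin ⟨b', c', D'⟩ h)) hreg hd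

lemma three_le_of_regular {d : ℕ} (hS : G.PreconnectedOn ↑S)
    (hS2 : ∀ v ∈ S, G.PreconnectedOn ↑(S.erase v)) (hreg : ∀ v ∈ S, G.degreeIn S v = d)
    (hnc : ¬IsCompleteSet G ↑S) (hncy : ¬IsCycleSet G ↑S) : 3 ≤ d := by
  obtain ⟨p, hp, q, hq, hpq, hnpq⟩ : ∃ p ∈ S, ∃ q ∈ S, p ≠ q ∧ ¬G.Adj p q := by
    by_contra! h
    exact hnc h
  obtain ⟨z, hz, hpz⟩ := (hS p hp q hq).exists_adj hpq
  have hqz : q ≠ z := fun h => hnpq (h ▸ hpz)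
  obtain ⟨z', hz', hpz'⟩ := (hS2 z hz p (mem_erase.2 ⟨hpz.ne, hp⟩) q
    (mem_erase.2 ⟨hqz, hq⟩)).exists_adj hpq
  have hzz' : z ≠ z' := fun h => (mem_erase.1 hz').1 h.symm
  have h2 : 2 ≤ d := by
    rw [← hreg p hp, degreeIn, ← card_pair hzz']
    refine card_le_card fun y hy => ?_
    rcases mem_insert.1 hy with rfl | hy
    · exact mem_filter.2 ⟨hz, hpz⟩
    · exact mem_filter.2 ⟨(mem_erase.1 (mem_singleton.1 hy ▸ hz')).2, mem_singleton.1 hy ▸ hpz'⟩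
  refine lt_of_le_of_ne h2 fun h2d => hncy ⟨?_, ?_, fun v hv => ?_⟩
  · exact connected_induce_iff_preconnectedOn.2 ⟨⟨p, hp⟩, hS⟩
  · rw [Set.ncard_coe_finset]
    exact two_lt_card.2 ⟨p, hp, q, hq, z, hz, hpq, hpz.ne, hqz⟩
  · rw [h2d, ← hreg v hv, degreeIn, ← Set.ncard_coe_finset, coe_filter]
    rfl

end SimpleGraph

/-! ### The `2`-connected case -/

namespace Cover

open SimpleGraph

variable {V : Type*} {G : SimpleGraph V} {C : Cover G} {S : Finset V} {P : V → Finset ℕ}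

lemma card_le_card_of_forall_matched {u w : V} (h : ∀ β ∈ P u, ∃ x ∈ P w, C.M w u x β) :
    (P u).card ≤ (P w).card :=
  card_le_card_of_forall_subsingleton (fun β x => C.M w u x β) h
    fun _ _ _ h₁ _ h₂ => C.matching_right _ _ _ _ _ h₁.2 h₂.2

/-- Colour `u` by `β`; then `w` has more colours than uncoloured neighbours. -/
lemma exists_isColouringOn_of_unmatched {u w : V} {β : ℕ} (hu : u ∈ S) (hw : w ∈ S)
    (huw : G.Adj u w) (hconn : G.PreconnectedOn ↑(S.erase u))
    (hdeg : ∀ z ∈ S, G.degreeIn S z ≤ (P z).card) (hβ : β ∈ P u)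
    (hno : ∀ x ∈ P w, ¬C.M w u x β) : ∃ φ, C.IsColouringOn S P φ := by
  have hwu : w ∈ S \ {u} := mem_sdiff.2 ⟨hw, by simpa using huw.ne'⟩
  have havail : C.avail P {u} (fun _ => β) w = P w :=
    filter_true_of_mem fun x hx v hv _ => mem_singleton.1 hv ▸ hno x hx
  refine exists_isColouringOn_of_precolouring (W := {u}) (φ₀ := fun _ => β)
    ⟨by simpa using hβ, by simp⟩ (singleton_subset_iff.2 hu) hwu ?_ hdeg ?_
  · rw [sdiff_singleton_eq_erase] at hwu ⊢
    exact fun z hz => hconn z hz w hwu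
  · rw [havail]
    exact lt_of_lt_of_le (degreeIn_lt sdiff_subset hu (by simp) huw.symm) (hdeg w hw)

/-- Colour `b` and `c` by partners of the same colour `x` of `a`: then `a` loses only one
colour to two neighbours. -/
lemma exists_isColouringOn_of_adj_adj {a b c : V} {x : ℕ} (ha : a ∈ S) (hb : b ∈ S)
    (hc : c ∈ S) (hab : G.Adj a b) (hac : G.Adj a c) (hbc : b ≠ c) (hnbc : ¬G.Adj b c)
    (hconn : G.PreconnectedOn ↑(S \ {b, c})) (hdeg : ∀ z ∈ S, G.degreeIn S z ≤ (P z).card)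
    (hx : x ∈ P a) (hxb : ∃ β ∈ P b, C.M a b x β) (hxc : ∃ γ ∈ P c, C.M a c x γ) :
    ∃ φ, C.IsColouringOn S P φ := by
  obtain ⟨β, hβ, hxβ⟩ := hxb
  obtain ⟨γ, hγ, hxγ⟩ := hxc
  have hWS : {b, c} ⊆ S := insert_subset hb (singleton_subset_iff.2 hc)
  have ha' : a ∈ S \ {b, c} := by simpa [ha] using ⟨hab.ne, hac.ne⟩
  have hW : C.IsColouringOn {b, c} P fun z => if z = b then β else γ := by
    refine ⟨by simp [hβ, hγ, hbc.symm], ?_⟩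
    simp only [mem_insert, mem_singleton]
    rintro u (rfl | rfl) w (rfl | rfl) huw <;> simp_all [G.adj_symm huw]
  have hfree : (P a).erase x ⊆ C.avail P {b, c} (fun z => if z = b then β else γ) a := by
    intro y hy
    refine mem_filter.2 ⟨mem_of_mem_erase hy, fun w hw _ hM => (mem_erase.1 hy).1 ?_⟩
    rcases mem_insert.1 hw with rfl | hw
    · exact C.matching_left _ _ _ _ _ (by simpa using hM) hxβ
    · rw [mem_singleton.1 hw] at hM
      exact C.matching_left _ _ _ _ _ (by simpa [hbc.symm] using hM) hxγ
  have hsplit : G.degreeIn S a = G.degreeIn {b, c} a + G.degreeIn (S \ {b, c}) a := by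
    rw [← degreeIn_union disjoint_sdiff, union_sdiff_of_subset hWS]
  have hbc2 : G.degreeIn {b, c} a = 2 := by
    rw [degreeIn, filter_true_of_mem, card_pair hbc]
    simp [hab, hac]
  refine exists_isColouringOn_of_precolouring hW hWS ha' (fun z hz => hconn z hz a ha') hdeg ?_
  have := card_le_card hfree
  have := card_erase_of_mem hx
  have := hdeg a ha
  omega

theorem exists_isColouringOn_of_twoConnected (hS : G.PreconnectedOn ↑S)
    (hS2 : ∀ v ∈ S, G.PreconnectedOn ↑(S.erase v))
    (htight : ∀ v ∈ S, (P v).card = G.degreeIn S v)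
    (hnc : ¬IsCompleteSet G ↑S) (hncy : ¬IsCycleSet G ↑S) : ∃ φ, C.IsColouringOn S P φ := by
  have hdeg : ∀ z ∈ S, G.degreeIn S z ≤ (P z).card := fun z hz => (htight z hz).ge
  by_cases hunm : ∃ u ∈ S, ∃ w ∈ S, G.Adj u w ∧ ∃ β ∈ P u, ∀ x ∈ P w, ¬C.M w u x β
  · obtain ⟨u, hu, w, hw, huw, β, hβ, hno⟩ := hunm
    exact exists_isColouringOn_of_unmatched hu hw huw (hS2 u hu) hdeg hβ hno
  push Not at hunm
  obtain ⟨p, hp⟩ : S.Nonempty := by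
    by_contra! h
    exact hnc (by simp [h, IsCompleteSet])
  have hreg : ∀ v ∈ S, G.degreeIn S v = G.degreeIn S p := fun v hv => by
    rw [← htight v hv, ← htight p hp]
    refine ((hS p hp v hv).eq_of_forall_adj (f := fun z => (P z).card) ?_ hp).symm
    exact fun u hu w hw huw => (card_le_card_of_forall_matched (hunm u hu w hw huw)).antisymm
      (card_le_card_of_forall_matched (hunm w hw u hu huw.symm))
  obtain ⟨b, c, ⟨hb, hc, hbc, hnbc, a, ha, hab, hac⟩, hconn⟩ :=
    exists_distTwo_preconnectedOn_sdiff hS hS2 hreg (three_le_of_regular hS hS2 hreg hnc hncy)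
      hnc
  obtain ⟨x, hx⟩ : (P a).Nonempty := card_pos.1 (htight a ha ▸ degreeIn_pos hb hab)
  obtain ⟨β, hβ, hxβ⟩ := hunm a ha b hb hab x hx
  obtain ⟨γ, hγ, hxγ⟩ := hunm a ha c hc hac x hx
  exact exists_isColouringOn_of_adj_adj ha hb hc hab hac hbc hnbc hconn hdeg hx
    ⟨β, hβ, C.symm _ _ _ _ hxβ⟩ ⟨γ, hγ, C.symm _ _ _ _ hxγ⟩

end Cover

/-! ### Blocks and cut vertices -/

namespace SimpleGraph

variable {V : Type*} {G : SimpleGraph V} {S : Finset V} {B : Set V} {v z : V}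

lemma reachWithin_insert_componentIn_erase (hS : G.PreconnectedOn ↑S) (hv : v ∈ S)
    (hz : z ∈ S.erase v) : G.ReachWithin ↑(insert v (G.componentIn (S.erase v) z)) z v := by
  obtain ⟨a, ha, e, he, heK, hae⟩ := (hS z (mem_of_mem_erase hz) v hv).exists_boundary
    (X := ↑(G.componentIn (S.erase v) z)) (self_mem_componentIn hz)
    (fun h => notMem_erase v S (componentIn_subset h))
  have hev : e = v := by
    by_contra hev
    exact heK (closedIn_componentIn a ha e (mem_erase.2 ⟨hev, he⟩) hae)
  exact ((reachWithin_componentIn hz ha).mono (by simp)).tail (mem_insert_self _ _) (hev ▸ hae)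

variable (G) in
structure IsBadBlockIn (S : Finset V) (B : Set V) : Prop where
  subset : B ⊆ ↑S
  connected : (G.induce B).Connected
  noCutVertex : NoCutVertex G B
  maximal : ∀ B' : Set V, B' ⊆ ↑S → B ⊆ B' → (G.induce B').Connected → NoCutVertex G B' →
    B' = B
  not_complete : ¬IsCompleteSet G B
  not_cycle : ¬IsCycleSet G B

namespace IsBadBlockIn

lemma mono {S' : Finset V} (hB : G.IsBadBlockIn S B) (hS' : S' ⊆ S) (hBS' : B ⊆ ↑S') :
    G.IsBadBlockIn S' B :=
  ⟨hBS', hB.connected, hB.noCutVertex,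
    fun B' h => hB.maximal B' (h.trans (coe_subset.2 hS')), hB.not_complete, hB.not_cycle⟩

lemma eq_of_twoConnected (hB : G.IsBadBlockIn S B) (hS : G.PreconnectedOn ↑S)
    (hS2 : ∀ v ∈ S, G.PreconnectedOn ↑(S.erase v)) : B = ↑S := by
  obtain ⟨b⟩ := hB.connected.nonempty
  refine (hB.maximal _ subset_rfl hB.subset
    (connected_induce_iff_preconnectedOn.2 ⟨⟨b, hB.subset b.2⟩, hS⟩) fun v hv => ?_).symm
  rw [preconnected_induce_iff_preconnectedOn, ← coe_erase]
  exact hS2 v hv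

lemma exists_componentIn_erase (hB : G.IsBadBlockIn S B) (hS : G.PreconnectedOn ↑S)
    (hv : v ∈ S) (hcut : ¬G.PreconnectedOn ↑(S.erase v)) :
    ∃ K ⊆ S.erase v, B ⊆ ↑(insert v K) ∧ insert v K ⊂ S ∧ G.PreconnectedOn ↑(insert v K) ∧
      ∀ z ∈ S \ K, G.ReachWithin ↑(S \ K) z v := by
  obtain ⟨b₀, hb₀B, hb₀v⟩ : ∃ b₀ ∈ B, b₀ ≠ v := by
    by_contra! h
    exact hB.not_complete fun x hx y hy hxy => absurd ((h x hx).trans (h y hy).symm) hxy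
  have hb₀ : b₀ ∈ S.erase v := mem_erase.2 ⟨hb₀v, hB.subset hb₀B⟩
  set K := G.componentIn (S.erase v) b₀
  have hBv : G.PreconnectedOn (B \ {v}) := by
    rw [← preconnected_induce_iff_preconnectedOn]
    by_cases hvB : v ∈ B
    · exact hB.noCutVertex v hvB
    · rw [Set.sdiff_singleton_eq_self hvB]
      exact hB.connected.preconnected
  refine ⟨K, componentIn_subset, fun z hzB => ?_, ?_, ?_, fun z hz => ?_⟩
  · by_cases hzv : z = v
    · exact hzv ▸ mem_insert_self v K
    refine mem_insert_of_mem (mem_componentIn.2 ⟨mem_erase.2 ⟨hzv, hB.subset hzB⟩, ?_⟩)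
    refine (hBv b₀ ⟨hb₀B, hb₀v⟩ z ⟨hzB, hzv⟩).mono fun x hx => ?_
    exact mem_erase.2 ⟨hx.2, hB.subset hx.1⟩
  · refine (ssubset_iff_of_subset (insert_subset hv (componentIn_subset.trans
      (erase_subset v S)))).2 ?_
    by_contra! hK
    have hK' : ∀ x ∈ S.erase v, G.ReachWithin ↑(S.erase v) b₀ x := fun x hx =>
      (mem_componentIn.1 ((mem_insert.1 (hK x (mem_of_mem_erase hx))).resolve_left
        (mem_erase.1 hx).1)).2
    exact hcut fun x hx y hy => ((hK' x hx).symm hb₀).trans (hK' y hy)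
  · refine preconnectedOn_of_forall_reachWithin (r := v) fun z hz => ?_
    rcases mem_insert.1 hz with rfl | hz
    · exact .refl
    · exact (((reachWithin_componentIn hb₀ hz).symm (self_mem_componentIn hb₀)).mono
        (coe_subset.2 (subset_insert v K))).trans
        (reachWithin_insert_componentIn_erase hS hv hb₀)
  · obtain ⟨hzS, hzK⟩ := mem_sdiff.1 hz
    by_cases hzv : z = v
    · exact hzv ▸ .refl
    have hz' : z ∈ S.erase v := mem_erase.2 ⟨hzv, hzS⟩
    refine (reachWithin_insert_componentIn_erase hS hv hz').mono fun x hx => ?_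
    rcases mem_insert.1 hx with rfl | hx
    · exact mem_sdiff.2 ⟨hv, fun h => notMem_erase x S (componentIn_subset h)⟩
    · exact mem_sdiff.2 ⟨mem_of_mem_erase (componentIn_subset hx),
        notMem_of_mem_componentIn closedIn_componentIn hz' hzK hx⟩

end IsBadBlockIn

end SimpleGraph

namespace Cover

open SimpleGraph

variable {V : Type*} {G : SimpleGraph V} {C : Cover G}

theorem exists_isColouringOn_of_isBadBlockIn {B : Set V} {S : Finset V} {P : V → Finset ℕ}
    (hS : G.PreconnectedOn ↑S) (hdeg : ∀ z ∈ S, G.degreeIn S z ≤ (P z).card)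
    (hB : G.IsBadBlockIn S B) : ∃ φ, C.IsColouringOn S P φ := by
  induction S using Finset.strongInduction generalizing P with
  | _ S ih =>
  by_cases hsur : ∃ v ∈ S, G.degreeIn S v < (P v).card
  · obtain ⟨v, hv, hsur⟩ := hsur
    exact exists_isColouringOn_of_surplus (fun z hz => hS z hz v hv) hv hdeg hsur
  push Not at hsur
  by_cases h2 : ∀ v ∈ S, G.PreconnectedOn ↑(S.erase v)
  · have hBS := hB.eq_of_twoConnected hS h2
    exact exists_isColouringOn_of_twoConnected hS h2
      (fun v hv => (hsur v hv).antisymm (hdeg v hv)) (hBS ▸ hB.not_complete) (hBS ▸ hB.not_cycle)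
  push Not at h2
  obtain ⟨v, hv, hcut⟩ := h2
  obtain ⟨K, hKS, hBK, hKss, hKconn, hreach⟩ := hB.exists_componentIn_erase hS hv hcut
  obtain ⟨ψ, hψ⟩ := exists_isColouringOn_erase (C := C) (P := P) hreach fun z hz _ =>
    (degreeIn_mono sdiff_subset).trans (hdeg z (sdiff_subset hz))
  have hvK : v ∉ K := fun h => notMem_erase v S (hKS h)
  have hunion : (S \ K).erase v ∪ insert v K = S := by
    ext z
    by_cases hzv : z = v
    · simp [hzv, hv]
    by_cases hzK : z ∈ K
    · simp [hzv, hzK, mem_of_mem_erase (hKS hzK)]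
    · simp [hzv, hzK]
  have hdisj : Disjoint ((S \ K).erase v) (insert v K) := by
    rw [disjoint_insert_right, Finset.disjoint_left]
    exact ⟨notMem_erase v _, fun z hz hzK => (mem_sdiff.1 (mem_of_mem_erase hz)).2 hzK⟩
  obtain ⟨φ, hφ⟩ := ih _ hKss (P := C.avail P _ ψ) hKconn
    (fun z hz => degreeIn_le_card_avail hdisj (by rw [hunion]; exact hdeg z (hKss.subset hz)))
    (hB.mono hKss.subset hBK)
  rw [← hunion]
  exact ⟨_, hψ.piecewise hφ hdisj⟩

end Cover

namespace SimpleGraph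

variable {V : Type*} {G : SimpleGraph V}

lemma Reachable.reachWithin_univ {u v : V} (h : G.Reachable u v) :
    G.ReachWithin Set.univ u v := by
  obtain ⟨p⟩ := h
  induction p with
  | nil => exact .refl
  | cons h _ ih => exact ReflTransGen.head ⟨trivial, h⟩ ih

variable [Fintype V]

lemma degreeIn_univ (v : V) : G.degreeIn univ v = deg G v := by
  rw [degreeIn, deg, ← Set.ncard_coe_finset, coe_filter]
  simp [neighborSet]

lemma IsBadBlockIn.of_isBlock {B : Set V} (hB : IsBlock G B) (hnc : ¬IsCompleteSet G B)
    (hncy : ¬IsCycleSet G B) : G.IsBadBlockIn univ B :=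
  ⟨by simp, hB.1, hB.2.1, fun B' _ => hB.2.2 B', hnc, hncy⟩

end SimpleGraph

/-- If `G` is a connected graph and `(L, M)` is a cover with `|L(v)| ≥ deg v` for all
`v`, and it is not the case that `|L(v)| = deg v` for every `v` with `G` a GDP-tree,
then `G` has an `(L, M)`-colouring. -/
theorem stmt_6 {V : Type*} [Fintype V] (G : SimpleGraph V) (hconn : G.Connected)
    (C : Cover G) (hL : ∀ v, deg G v ≤ (C.L v).card)
    (hnot : ¬ ((∀ v, (C.L v).card = deg G v) ∧ IsGDPTree G)) :
    ∃ φ : V → ℕ, C.IsColouring φ := by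
  have hU : G.PreconnectedOn ↑(univ : Finset V) := fun u _ v _ => by
    simpa using (hconn.preconnected u v).reachWithin_univ
  have hdeg : ∀ v ∈ univ, G.degreeIn univ v ≤ (C.L v).card := fun v _ =>
    SimpleGraph.degreeIn_univ v ▸ hL v
  suffices ∃ φ, C.IsColouringOn univ C.L φ by
    obtain ⟨φ, hφL, hφM⟩ := this
    exact ⟨φ, fun v => hφL v (mem_univ v), fun u v huv => hφM u (mem_univ u) v (mem_univ v) huv⟩
  by_cases htight : ∀ v, (C.L v).card = deg G v
  · obtain ⟨B, hB, hbad⟩ : ∃ B, IsBlock G B ∧ ¬(IsCompleteSet G B ∨ IsCycleSet G B) := by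
      by_contra! h
      exact hnot ⟨htight, hconn, h⟩
    rw [not_or] at hbad
    exact Cover.exists_isColouringOn_of_isBadBlockIn hU hdeg
      (SimpleGraph.IsBadBlockIn.of_isBlock hB hbad.1 hbad.2)
  · push Not at htight
    obtain ⟨v, hv⟩ := htight
    refine Cover.exists_isColouringOn_of_surplus (fun z _ => hU z (mem_univ z) v (mem_univ v))
      (mem_univ v) hdeg ?_
    rw [SimpleGraph.degreeIn_univ]
    exact lt_of_le_of_ne (hL v) (Ne.symm hv)
end

section
/- If a connected graph G is a Gallai-tree, i.e., every block of G is a complete graph or an odd cycle, then G is not degree-choosable: there exists a list assignment L with |L(v)| = deg_G(v) for all v such that G has no proper L-colouring. -/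
/-- A Gallai-tree: a connected graph all of whose blocks are complete graphs or odd
cycles. -/
noncomputable def IsGallaiTree {V : Type*} (G : SimpleGraph V) : Prop :=
  G.Connected ∧ ∀ B : Set V, IsBlock G B →
    IsCompleteSet G B ∨ (IsCycleSet G B ∧ Odd B.ncard)

/-!
A connected graph with a cut vertex has an end block `B`, attached to the rest of the graph at
a single vertex `v`; deleting `B - v` leaves a connected graph whose blocks are blocks of `G`.
Each block is `d`-regular but not `d`-colourable (`d = n - 1` for `Kₙ`, `d = 2` for an odd
cycle). Given a bad degree-list assignment `L'` of
`G - (B - v)`, give every vertex of `B - v` the same `d` fresh colours `C` and `v` the list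
`L'(v) ∪ C`. The list sizes are the degrees, and a colouring cannot use a colour of `C` at `v`,
since it would then colour `B` properly from `C`; so it restricts to an `L'`-colouring of
`G - (B - v)`.
-/

open SimpleGraph Set

namespace GallaiTree

variable {V : Type*} {G : SimpleGraph V} {S T B R D : Set V} {u v w x r : V}

def ReachIn (G : SimpleGraph V) (S : Set V) (u v : V) : Prop :=
  ∃ p : G.Walk u v, ∀ x ∈ p.support, x ∈ S

def PreconnIn (G : SimpleGraph V) (S : Set V) : Prop :=
  ∀ u ∈ S, ∀ v ∈ S, ReachIn G S u v

def Nonseparable (G : SimpleGraph V) (S : Set V) : Prop :=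
  S.Nonempty ∧ PreconnIn G S ∧ ∀ v ∈ S, PreconnIn G (S \ {v})

def IsBlockIn (G : SimpleGraph V) (S B : Set V) : Prop :=
  Maximal (fun T => T ⊆ S ∧ Nonseparable G T) B

/-- `R` hangs off the rest of `S` at the single vertex `v`, as an end block minus its cut vertex
does. -/
def IsPendantAt (G : SimpleGraph V) (S R : Set V) (v : V) : Prop :=
  ∀ u ∈ R, ∀ w ∈ S, G.Adj u w → w ∈ R ∨ w = v

def IsGallaiIn (G : SimpleGraph V) (S : Set V) : Prop :=
  ∀ B, IsBlockIn G S B → IsCompleteSet G B ∨ (IsCycleSet G B ∧ Odd B.ncard)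

noncomputable def degIn (G : SimpleGraph V) (S : Set V) (v : V) : ℕ :=
  {w ∈ S | G.Adj v w}.ncard

def ListColourableIn (G : SimpleGraph V) (S : Set V) (L : V → Finset ℕ) : Prop :=
  ∃ φ : V → ℕ, (∀ v ∈ S, φ v ∈ L v) ∧ ∀ u ∈ S, ∀ w ∈ S, G.Adj u w → φ u ≠ φ w

def NotDegreeChoosableIn (G : SimpleGraph V) (S : Set V) : Prop :=
  ∃ L : V → Finset ℕ, (∀ v ∈ S, (L v).card = degIn G S v) ∧ ¬ ListColourableIn G S L

namespace ReachIn

lemma mem_right (h : ReachIn G S u v) : v ∈ S := by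
  obtain ⟨p, hp⟩ := h
  exact hp _ p.end_mem_support

lemma refl (h : u ∈ S) : ReachIn G S u u :=
  ⟨.nil, by simpa using h⟩

lemma symm (h : ReachIn G S u v) : ReachIn G S v u := by
  obtain ⟨p, hp⟩ := h
  exact ⟨p.reverse, by simpa using hp⟩

lemma trans (h : ReachIn G S u v) (h' : ReachIn G S v w) : ReachIn G S u w := by
  obtain ⟨p, hp⟩ := h
  obtain ⟨q, hq⟩ := h'
  exact ⟨p.append q, fun x hx => (Walk.mem_support_append_iff p q).1 hx |>.elim (hp x) (hq x)⟩

lemma of_adj (h : G.Adj u v) (hu : u ∈ S) (hv : v ∈ S) : ReachIn G S u v :=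
  ⟨h.toWalk, by simp [hu, hv]⟩

end ReachIn

lemma preconnIn_iff : PreconnIn G S ↔ (G.induce S).Preconnected := by
  refine ⟨fun h ⟨u, hu⟩ ⟨v, hv⟩ => ?_, fun h u hu v hv => ?_⟩
  · obtain ⟨p, hp⟩ := h u hu v hv
    exact (p.connected_induce_support.preconnected ⟨u, p.start_mem_support⟩
      ⟨v, p.end_mem_support⟩).map (induceHomOfLE G hp).toHom
  · obtain ⟨p⟩ := h ⟨u, hu⟩ ⟨v, hv⟩
    refine ⟨p.map (Embedding.induce S).toHom, fun x hx => ?_⟩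
    obtain ⟨y, -, rfl⟩ := List.mem_map.1 (Walk.support_map _ p ▸ hx)
    exact y.2

lemma nonseparable_iff : Nonseparable G S ↔ (G.induce S).Connected ∧ NoCutVertex G S := by
  simp only [Nonseparable, NoCutVertex, preconnIn_iff, connected_iff, nonempty_coe_sort]
  tauto

lemma isBlockIn_univ_iff : IsBlockIn G univ B ↔ IsBlock G B := by
  simp only [IsBlockIn, IsBlock, Maximal, subset_univ, true_and, nonseparable_iff]
  rw [and_assoc]
  refine and_congr_right fun _ => and_congr_right fun _ =>
    ⟨fun h B' hBB' hc hn => (h ⟨hc, hn⟩ hBB').antisymm hBB', fun h B' hB' hBB' => ?_⟩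
  exact (h B' hBB' hB'.1 hB'.2).le

lemma degIn_univ (G : SimpleGraph V) (v : V) : degIn G univ v = deg G v := by
  simp [degIn, deg, neighborSet]

lemma preconnIn_of_subsingleton (h : S.Subsingleton) : PreconnIn G S :=
  fun _ hu _ hv => h hu hv ▸ ReachIn.refl hu

lemma PreconnIn.exists_adj (hS : PreconnIn G S) (hu : u ∈ S) (hv : v ∈ S) (huv : u ≠ v) :
    ∃ w ∈ S, G.Adj u w := by
  obtain ⟨p, hp⟩ := hS u hu v hv
  cases p with
  | nil => exact absurd rfl huv
  | cons h p => exact ⟨_, hp _ (by simp), h⟩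

lemma nonseparable_pair (h : G.Adj u v) : Nonseparable G {u, v} := by
  refine ⟨insert_nonempty u {v}, ?_, fun w _ => preconnIn_of_subsingleton ?_⟩
  · rintro a (rfl | rfl) b (rfl | rfl)
    exacts [.refl (by simp), .of_adj h (by simp) (by simp),
      .of_adj h.symm (by simp) (by simp), .refl (by simp)]
  · rintro a ⟨ha, haw⟩ b ⟨hb, hbw⟩
    simp only [mem_insert_iff, mem_singleton_iff] at ha hb haw hbw
    grind

namespace IsPendantAt

variable (hR : IsPendantAt G S R v)
include hR

lemma mem_of_walk : ∀ {a b : V} (p : G.Walk a b), (∀ x ∈ p.support, x ∈ S \ {v}) →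
    a ∈ R → b ∈ R
  | _, _, .nil, _, ha => ha
  | _, _, .cons h p, hp, ha => by
    have hz := hp _ (List.mem_cons_of_mem _ p.start_mem_support)
    exact mem_of_walk p (fun x hx => hp x (List.mem_cons_of_mem _ hx))
      ((hR _ ha _ hz.1 h).resolve_right hz.2)

lemma reachIn_insert_of_walk : ∀ {a b : V} (p : G.Walk a b), (∀ x ∈ p.support, x ∈ S) →
    a ∈ R → b ∉ R → ReachIn G (insert v R) a v
  | _, _, .nil, _, ha, hb => absurd ha hb
  | _, _, .cons h p, hp, ha, hb => by
    have hp' : ∀ x ∈ p.support, x ∈ S := fun x hx => hp x (List.mem_cons_of_mem _ hx)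
    rcases hR _ ha _ (hp' _ p.start_mem_support) h with hz | rfl
    · exact (ReachIn.of_adj h (mem_insert_of_mem v ha) (mem_insert_of_mem v hz)).trans
        (reachIn_insert_of_walk p hp' hz hb)
    · exact .of_adj h (mem_insert_of_mem _ ha) (mem_insert _ R)

/-- A walk in `S` ending outside `R` can be shortcut through `v` to avoid `R`. -/
lemma reachIn_sdiff_of_walk : ∀ {a b : V} (p : G.Walk a b), (∀ x ∈ p.support, x ∈ S) →
    b ∉ R → (a ∉ R → ReachIn G (S \ R) a b) ∧ (a ∈ R → ReachIn G (S \ R) v b)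
  | _, _, .nil, hp, hb => ⟨fun ha => .refl ⟨hp _ (by simp), ha⟩, fun ha => absurd ha hb⟩
  | a, _, .cons (v := z) h p, hp, hb => by
    have ha : a ∈ S := hp _ (by simp)
    have hp' : ∀ x ∈ p.support, x ∈ S := fun x hx => hp x (List.mem_cons_of_mem _ hx)
    have hz : z ∈ S := hp' _ p.start_mem_support
    obtain ⟨ih, ih'⟩ := reachIn_sdiff_of_walk p hp' hb
    refine ⟨fun haR => ?_, fun haR => ?_⟩
    · by_cases hzR : z ∈ R
      · obtain rfl := (hR z hzR a ha h.symm).resolve_left haR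
        exact ih' hzR
      · exact (ReachIn.of_adj (S := S \ R) h ⟨ha, haR⟩ ⟨hz, hzR⟩).trans (ih hzR)
    · by_cases hzR : z ∈ R
      · exact ih' hzR
      · obtain rfl := (hR a haR z hz h).resolve_left hzR
        exact ih hzR

end IsPendantAt

lemma PreconnIn.sdiff_of_isPendantAt (hS : PreconnIn G S) (hR : IsPendantAt G S R v) :
    PreconnIn G (S \ R) := fun a ha b hb => by
  obtain ⟨p, hp⟩ := hS a ha.1 b hb.1
  exact (hR.reachIn_sdiff_of_walk p hp hb.2).1 ha.2

lemma PreconnIn.insert_of_isPendantAt (hS : PreconnIn G S) (hR : IsPendantAt G S R v)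
    (hRS : R ⊆ S) (hv : v ∈ S) (hvR : v ∉ R) : PreconnIn G (insert v R) := by
  have hreach : ∀ a ∈ insert v R, ReachIn G (insert v R) a v := by
    rintro a (rfl | ha)
    · exact .refl (mem_insert a R)
    · obtain ⟨p, hp⟩ := hS a (hRS ha) v hv
      exact hR.reachIn_insert_of_walk p hp ha hvR
  exact fun a ha b hb => (hreach a ha).trans (hreach b hb).symm

/-- `v` separates `R` from the rest of `S`, while `D` minus `v` stays connected. -/
lemma Nonseparable.subset_insert_of_isPendantAt (hD : Nonseparable G D) (hDS : D ⊆ S)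
    (hR : IsPendantAt G S R v) (hvR : v ∉ R) (hx : x ∈ D) (hxR : x ∈ R) : D ⊆ insert v R := by
  have hD' : PreconnIn G (D \ {v}) := by
    by_cases hv : v ∈ D
    · exact hD.2.2 v hv
    · rw [sdiff_singleton_eq_self hv]
      exact hD.2.1
  intro u hu
  by_cases huv : u = v
  · exact huv ▸ mem_insert v R
  obtain ⟨p, hp⟩ := hD' x ⟨hx, fun h => hvR (h ▸ hxR)⟩ u ⟨hu, huv⟩
  exact mem_insert_of_mem v (hR.mem_of_walk p (fun y hy => ⟨hDS (hp y hy).1, (hp y hy).2⟩) hxR)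

lemma IsPendantAt.of_insert (hR : IsPendantAt G S R v) (hT : IsPendantAt G (insert v R) T w)
    (hTR : T ⊆ R) : IsPendantAt G S T w := fun u hu x hx h =>
  hT u hu x ((hR u (hTR hu) x hx h).elim (mem_insert_of_mem v) (· ▸ mem_insert v R)) h

lemma exists_isBlockIn_superset [Finite V] (hBS : B ⊆ S) (hB : Nonseparable G B) :
    ∃ D, IsBlockIn G S D ∧ B ⊆ D := by
  obtain ⟨D, hBD, hD⟩ :=
    Finite.exists_le_maximal (p := fun T => T ⊆ S ∧ Nonseparable G T) ⟨hBS, hB⟩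
  exact ⟨D, hD, hBD⟩

lemma IsBlockIn.nontrivial (hB : IsBlockIn G S B) (hS : PreconnIn G S) (hS2 : S.Nontrivial) :
    B.Nontrivial := by
  obtain ⟨u, hu⟩ := hB.1.2.1
  by_contra hB1
  have hBu : B = {u} := (not_nontrivial_iff.1 hB1).eq_singleton_of_mem hu
  obtain ⟨y, hy, hyu⟩ := hS2.exists_ne u
  obtain ⟨w, hw, huw⟩ := hS.exists_adj (hB.1.1 hu) hy hyu.symm
  have hwB : w ∈ B :=
    hB.2 ⟨insert_subset (hB.1.1 hu) (singleton_subset_iff.2 hw), nonseparable_pair huw⟩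
      (hBu ▸ singleton_subset_iff.2 (mem_insert u {w})) (mem_insert_of_mem u rfl)
  rw [hBu] at hwB
  exact huw.ne hwB.symm

lemma IsBlockIn.of_isPendantAt (hB : IsBlockIn G (insert v R) B) (hR : IsPendantAt G S R v)
    (hvR : v ∉ R) (hRS : insert v R ⊆ S) (hBR : (B ∩ R).Nonempty) : IsBlockIn G S B := by
  obtain ⟨x, hxB, hxR⟩ := hBR
  exact ⟨⟨hB.1.1.trans hRS, hB.1.2⟩, fun D hD hBD =>
    hB.2 ⟨hD.2.subset_insert_of_isPendantAt hD.1 hR hvR (hBD hxB) hxR, hD.2⟩ hBD⟩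

lemma IsGallaiIn.sdiff_of_isPendantAt [Finite V] (hG : IsGallaiIn G S)
    (hR : IsPendantAt G S R v) (hvR : v ∉ R) : IsGallaiIn G (S \ R) := by
  intro B hB
  obtain ⟨D, hD, hBD⟩ := exists_isBlockIn_superset (hB.1.1.trans sdiff_subset) hB.1.2
  by_cases hDR : (D ∩ R).Nonempty
  · obtain ⟨x, hxD, hxR⟩ := hDR
    have hDv := hD.1.2.subset_insert_of_isPendantAt hD.1.1 hR hvR hxD hxR
    have hBv : ∀ y ∈ B, y = v := fun y hy => (hDv (hBD hy)).resolve_right (hB.1.1 hy).2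
    exact .inl fun a ha b hb hab => absurd ((hBv a ha).trans (hBv b hb).symm) hab
  · have hDS : D ⊆ S \ R := fun y hy => ⟨hD.1.1 hy, fun hyR => hDR ⟨y, hy, hyR⟩⟩
    rw [hB.eq_of_subset ⟨hDS, hD.1.2⟩ hBD]
    exact hG D hD

/-- The root `r` drives the induction: below a cut vertex `c`, pass to a component of `S - c`
avoiding `r`, together with `c` as its new root, so that the end block found there meets the
rest of `S` only at its attachment vertex. -/
lemma exists_isBlockIn_isPendantAt [Finite V] (hS : PreconnIn G S) (hr : r ∈ S) :
    ∃ B v, IsBlockIn G S B ∧ v ∈ B ∧ IsPendantAt G S (B \ {v}) v ∧ (r ∈ B → r = v) := by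
  induction hn : S.ncard using Nat.strong_induction_on generalizing S r with
  | _ n ih =>
  by_cases hsep : Nonseparable G S
  · refine ⟨S, r, ⟨⟨subset_rfl, hsep⟩, fun _ hT _ => hT.1⟩, hr, fun _ _ w hw _ => ?_,
      fun _ => rfl⟩
    by_cases hwr : w = r
    exacts [.inr hwr, .inl ⟨hw, hwr⟩]
  obtain ⟨c, hc, hcut⟩ : ∃ c ∈ S, ¬ PreconnIn G (S \ {c}) := by
    by_contra! h
    exact hsep ⟨⟨r, hr⟩, hS, h⟩
  simp only [PreconnIn, not_forall] at hcut
  obtain ⟨x, hx, y, hy, hxy⟩ := hcut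
  obtain ⟨x, hx, y, hy, hxy, hxr⟩ : ∃ x ∈ S \ {c}, ∃ y ∈ S \ {c},
      ¬ ReachIn G (S \ {c}) x y ∧ ¬ ReachIn G (S \ {c}) x r := by
    by_cases hxr : ReachIn G (S \ {c}) x r
    · exact ⟨y, hy, x, hx, fun h => hxy h.symm, fun h => hxy (hxr.trans h.symm)⟩
    · exact ⟨x, hx, y, hy, hxy, hxr⟩
  set K := {z | ReachIn G (S \ {c}) x z}
  have hKS : K ⊆ S \ {c} := fun z hz => hz.mem_right
  have hcK : c ∉ K := fun h => (hKS h).2 rfl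
  have hK : IsPendantAt G S K c := fun u hu w hw h =>
    or_iff_not_imp_right.2 fun hwc => hu.trans (.of_adj h hu.mem_right ⟨hw, hwc⟩)
  have hTS : insert c K ⊆ S := insert_subset hc (hKS.trans sdiff_subset)
  have hT := hS.insert_of_isPendantAt hK (hKS.trans sdiff_subset) hc hcK
  have hlt : (insert c K).ncard < n := hn ▸ ncard_lt_ncard
    ((ssubset_iff_of_subset hTS).2 ⟨y, hy.1, by rintro (h | h); exacts [hy.2 h, hxy h]⟩)
  obtain ⟨B, v, hB, hvB, hpend, hroot⟩ := ih _ hlt hT (mem_insert c K) rfl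
  have hBK : B \ {v} ⊆ K := fun u hu =>
    (hB.1.1 hu.1).resolve_left fun huc => hu.2 (huc.trans (hroot (huc ▸ hu.1)))
  obtain ⟨z, hzB, hzv⟩ := (hB.nontrivial hT
    ⟨c, mem_insert c K, x, mem_insert_of_mem c (.refl hx), fun h => hx.2 h.symm⟩).exists_ne v
  refine ⟨B, v, hB.of_isPendantAt hK hcK hTS ⟨z, hzB, hBK ⟨hzB, hzv⟩⟩, hvB,
    hK.of_insert hpend hBK, fun hrB => ?_⟩
  obtain rfl : r = c := (hB.1.1 hrB).resolve_right hxr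
  exact hroot hrB

lemma degIn_eq_of_subset (hTS : T ⊆ S) (h : ∀ w ∈ S, G.Adj u w → w ∈ T) :
    degIn G S u = degIn G T u := by
  unfold degIn
  congr 1
  ext w
  exact ⟨fun hw => ⟨h w hw.1 hw.2, hw.2⟩, fun hw => ⟨hTS hw.1, hw.2⟩⟩

lemma degIn_union [Finite V] (h : Disjoint S T) :
    degIn G (S ∪ T) u = degIn G S u + degIn G T u := by
  have hsplit : {w ∈ S ∪ T | G.Adj u w} = {w ∈ S | G.Adj u w} ∪ {w ∈ T | G.Adj u w} := sep_union
  rw [degIn, hsplit, ncard_union_eq (h.mono (sep_subset _ _) (sep_subset _ _))]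
  rfl

lemma degIn_sdiff_add_degIn_insert [Finite V] (hRS : R ⊆ S) :
    degIn G (S \ R) v + degIn G (insert v R) v = degIn G S v := by
  rw [degIn_eq_of_subset (subset_insert v R) fun w hw h => hw.resolve_left h.ne.symm,
    ← degIn_union disjoint_sdiff_left, sdiff_union_of_subset hRS]

lemma IsPendantAt.degIn_of_mem (hR : IsPendantAt G S R v) (hRS : insert v R ⊆ S) (hu : u ∈ R) :
    degIn G S u = degIn G (insert v R) u :=
  degIn_eq_of_subset hRS fun w hw h =>
    (hR u hu w hw h).elim (mem_insert_of_mem v) (· ▸ mem_insert v R)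

lemma IsPendantAt.degIn_of_notMem (hR : IsPendantAt G S R v) (hu : u ∈ S) (huR : u ∉ R)
    (huv : u ≠ v) : degIn G S u = degIn G (S \ R) u :=
  degIn_eq_of_subset sdiff_subset fun w hw h =>
    ⟨hw, fun hwR => (hR w hwR u hu h.symm).elim huR huv⟩

lemma exists_card_eq_disjoint {α : Type*} [Infinite α] (s : Finset α) (n : ℕ) :
    ∃ t : Finset α, t.card = n ∧ Disjoint s t := by
  classical
  obtain ⟨t, hst, ht⟩ := Infinite.exists_superset_card_eq s (s.card + n) (Nat.le_add_right _ _)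
  exact ⟨t \ s, by rw [Finset.card_sdiff_of_subset hst, ht, Nat.add_sub_cancel_left],
    Finset.disjoint_sdiff⟩

lemma IsCompleteSet.not_listColourableIn [Finite V] (hB : IsCompleteSet G B) {C : Finset ℕ}
    (hC : C.card < B.ncard) : ¬ ListColourableIn G B fun _ => C := by
  rintro ⟨φ, hφC, hφ⟩
  have hinj : InjOn φ B := fun x hx y hy hxy =>
    by_contra fun h => hφ x hx y hy (hB x hx y hy h) hxy
  have := ncard_le_ncard_of_injOn φ hφC hinj C.finite_toSet
  rw [ncard_coe_finset] at this
  omega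

/-- Double counting the edges between the two colour classes shows that they have equal size. -/
lemma ListColourableIn.even_ncard [Finite V] {d : ℕ} (hd : 0 < d)
    (hreg : ∀ u ∈ B, degIn G B u = d) {a b : ℕ} (hcol : ListColourableIn G B fun _ => {a, b}) :
    Even B.ncard := by
  classical
  obtain ⟨φ, hφ, hprop⟩ := hcol
  simp only [Finset.mem_insert, Finset.mem_singleton] at hφ
  set s := B.toFinite.toFinset
  have hdeg : ∀ u ∈ B, (s.filter (G.Adj u)).card = d := by
    intro u hu
    rw [← hreg u hu, degIn, ← ncard_coe_finset]
    congr 1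
    ext w
    simp [s]
  have hcross : ∀ x ∈ B, ∀ y ∈ B, G.Adj x y → (φ x = a ↔ ¬ φ y = a) := by
    intro x hx y hy h
    have := hprop x hx y hy h
    grind [hφ x hx, hφ y hy]
  set A := s.filter (φ · = a)
  set A' := s.filter fun x => ¬ φ x = a
  have hAA' : A.card * d = A'.card * d := by
    refine Finset.card_mul_eq_card_mul G.Adj (fun x hx => ?_) (fun y hy => ?_)
    · simp only [A, Finset.mem_filter, Finite.mem_toFinset, s] at hx
      rw [← hdeg x hx.1, Finset.bipartiteAbove, Finset.filter_filter]
      congr 1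
      ext w
      simp only [Finset.mem_filter, Finite.mem_toFinset, s]
      exact ⟨fun h => ⟨h.1, h.2.2⟩, fun h => ⟨h.1, (hcross x hx.1 w h.1 h.2).1 hx.2, h.2⟩⟩
    · simp only [A', Finset.mem_filter, Finite.mem_toFinset, s] at hy
      rw [← hdeg y hy.1, Finset.bipartiteBelow, Finset.filter_filter]
      congr 1
      ext w
      simp only [Finset.mem_filter, Finite.mem_toFinset, s]
      exact ⟨fun h => ⟨h.1, h.2.2.symm⟩,
        fun h => ⟨h.1, (hcross w h.1 y hy.1 h.2.symm).2 hy.2, h.2.symm⟩⟩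
  have hA := Nat.eq_of_mul_eq_mul_right hd hAA'
  have hs : A.card + A'.card = s.card := Finset.card_filter_add_card_filter_not _
  rw [ncard_eq_toFinset_card B B.toFinite]
  change Even s.card
  exact ⟨A.card, by omega⟩

lemma exists_regular_not_listColourableIn [Finite V]
    (hB : IsCompleteSet G B ∨ (IsCycleSet G B ∧ Odd B.ncard)) (hne : B.Nonempty) :
    ∃ d, (∀ u ∈ B, degIn G B u = d) ∧
      ∀ C : Finset ℕ, C.card = d → ¬ ListColourableIn G B fun _ => C := by
  rcases hB with hK | ⟨⟨-, -, hreg⟩, hodd⟩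
  · refine ⟨B.ncard - 1, fun u hu => ?_, fun C hC => IsCompleteSet.not_listColourableIn hK ?_⟩
    · rw [degIn, ← ncard_sdiff_singleton_of_mem hu]
      congr 1
      ext w
      exact ⟨fun hw => ⟨hw.1, hw.2.ne.symm⟩, fun hw => ⟨hw.1, hK u hu w hw.1 (Ne.symm hw.2)⟩⟩
    · have := hne.ncard_pos
      omega
  · refine ⟨2, hreg, fun C hC hcol => ?_⟩
    obtain ⟨a, b, -, rfl⟩ := Finset.card_eq_two.1 hC
    exact Nat.not_even_iff_odd.2 hodd (hcol.even_ncard two_pos hreg)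

lemma notDegreeChoosableIn_of_subsingleton (hne : S.Nonempty) (hS : S.Subsingleton) :
    NotDegreeChoosableIn G S := by
  obtain ⟨r, hr⟩ := hne
  refine ⟨fun _ => ∅, fun u hu => ?_, fun ⟨φ, hφ, _⟩ => by simpa using hφ r hr⟩
  have hnbr : {w ∈ S | G.Adj u w} = ∅ :=
    eq_empty_of_forall_notMem fun w hw => hw.2.ne (hS hu hw.1)
  rw [Finset.card_empty, degIn, hnbr, ncard_empty]

lemma NotDegreeChoosableIn.of_sdiff [Finite V] {d : ℕ} (hR : IsPendantAt G S R v)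
    (hRS : insert v R ⊆ S) (hvR : v ∉ R) (hreg : ∀ u ∈ insert v R, degIn G (insert v R) u = d)
    (hcol : ∀ C : Finset ℕ, C.card = d → ¬ ListColourableIn G (insert v R) fun _ => C)
    (h : NotDegreeChoosableIn G (S \ R)) : NotDegreeChoosableIn G S := by
  classical
  obtain ⟨L', hL'card, hL'⟩ := h
  obtain ⟨C, hCd, hC⟩ := exists_card_eq_disjoint (L' v) d
  refine ⟨fun u => if u ∈ R then C else if u = v then L' v ∪ C else L' u, fun u hu => ?_, ?_⟩
  · dsimp only
    by_cases huR : u ∈ R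
    · rw [if_pos huR, hCd, hR.degIn_of_mem hRS huR, hreg u (mem_insert_of_mem v huR)]
    by_cases huv : u = v
    · subst huv
      rw [if_neg hvR, if_pos rfl, Finset.card_union_of_disjoint hC, hL'card u ⟨hu, hvR⟩, hCd,
        ← hreg u (mem_insert u R), degIn_sdiff_add_degIn_insert ((subset_insert u R).trans hRS)]
    · rw [if_neg huR, if_neg huv, hL'card u ⟨hu, huR⟩, hR.degIn_of_notMem hu huR huv]
  · rintro ⟨φ, hφL, hφ⟩
    have hφv : φ v ∉ C := by
      intro hvC
      refine hcol C hCd ⟨φ, ?_, fun x hx y hy => hφ x (hRS hx) y (hRS hy)⟩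
      rintro u (rfl | hu)
      · exact hvC
      · simpa [hu] using hφL u (hRS (mem_insert_of_mem _ hu))
    refine hL' ⟨φ, fun u hu => ?_, fun x hx y hy => hφ x hx.1 y hy.1⟩
    have hφu := hφL u hu.1
    by_cases huv : u = v
    · subst huv
      simp only [if_neg hvR, if_true, Finset.mem_union] at hφu
      exact hφu.resolve_right hφv
    · simpa [hu.2, huv] using hφu

theorem notDegreeChoosableIn_of_isGallaiIn [Finite V] (hS : PreconnIn G S)
    (hG : IsGallaiIn G S) (hne : S.Nonempty) : NotDegreeChoosableIn G S := by
  induction hn : S.ncard using Nat.strong_induction_on generalizing S with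
  | _ n ih =>
  obtain hsub | hnt := S.subsingleton_or_nontrivial
  · exact notDegreeChoosableIn_of_subsingleton hne hsub
  obtain ⟨r, hr⟩ := hne
  obtain ⟨B, v, hB, hvB, hpend, -⟩ := exists_isBlockIn_isPendantAt hS hr
  have hvR : v ∉ B \ {v} := fun h => h.2 rfl
  have hBv : insert v (B \ {v}) = B := insert_sdiff_singleton.trans (insert_eq_of_mem hvB)
  obtain ⟨d, hreg, hcol⟩ := exists_regular_not_listColourableIn (hG B hB) ⟨v, hvB⟩
  rw [← hBv] at hreg hcol
  obtain ⟨x, hxB, hxv⟩ := (hB.nontrivial hS hnt).exists_ne v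
  have hlt : (S \ (B \ {v})).ncard < n := hn ▸ ncard_lt_ncard
    ((ssubset_iff_of_subset sdiff_subset).2 ⟨x, hB.1.1 hxB, fun h => h.2 ⟨hxB, hxv⟩⟩)
  exact .of_sdiff hpend (hBv.subset.trans hB.1.1) hvR hreg hcol
    (ih _ hlt (hS.sdiff_of_isPendantAt hpend) (hG.sdiff_of_isPendantAt hpend hvR)
      ⟨v, hB.1.1 hvB, hvR⟩ rfl)

end GallaiTree

open GallaiTree in
/-- A connected Gallai-tree is not degree-choosable: there is a list assignment `L`
with `|L(v)| = deg v` for all `v` admitting no proper `L`-colouring. -/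
theorem stmt_7 {V : Type*} [Fintype V] (G : SimpleGraph V) (hG : IsGallaiTree G) :
    ∃ L : V → Finset ℕ,
      (∀ v, (L v).card = deg G v) ∧
      ¬ ∃ φ : V → ℕ, (∀ v, φ v ∈ L v) ∧ ∀ u v, G.Adj u v → φ u ≠ φ v := by
  obtain ⟨hconn, hblocks⟩ := hG
  have := hconn.nonempty
  obtain ⟨L, hL, hnot⟩ := notDegreeChoosableIn_of_isGallaiIn
    (fun u _ v _ => ⟨(hconn.preconnected u v).some, fun _ _ => mem_univ _⟩)
    (fun B hB => hblocks B (isBlockIn_univ_iff.1 hB)) univ_nonempty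
  refine ⟨L, fun v => by rw [hL v (mem_univ v), degIn_univ], fun ⟨φ, hφL, hφ⟩ => hnot ?_⟩
  exact ⟨φ, fun v _ => hφL v, fun u _ w _ => hφ u w⟩
end

section
/- Every non-empty graph G with at least 2^{s+1} · t · |V(G)| edges has a K_{s,t}-minor, for positive integers s, t. -/
/-!
Induction on `s` and, for fixed `s`, on the number of vertices; put `c = 2^(s+2) t`.
If some edge `xy` has fewer than `c` common neighbours, contracting it loses one vertex and at
most `c` edges, so the density `c` survives in a smaller graph. Otherwise every vertex of a
neighbourhood `N(x)` has at least `c` neighbours inside `N(x)`, so `G[N(x)]` has at least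
`2^(s+1) t |N(x)|` edges and, by induction on `s`, a `K_{s,t}` minor; all its branch sets are
adjacent to `x`, and `{x}` becomes the branch set of a new vertex on the `s` side.
For `s = 0` the density forces `|V| ≥ t`, and `K_{0,t}` has no edges.
-/

/-- `H` is a minor of `G`: there are disjoint nonempty connected branch sets in `G`,
one for each vertex of `H`, with an edge of `G` between the branch sets of any two
adjacent vertices of `H`. -/
def HasMinor {V W : Type*} (G : SimpleGraph V) (H : SimpleGraph W) : Prop :=
  ∃ φ : W → Set V,
    (∀ w, (φ w).Nonempty) ∧
    (∀ w, (G.induce (φ w)).Connected) ∧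
    (∀ w w', w ≠ w' → Disjoint (φ w) (φ w')) ∧
    (∀ w w', H.Adj w w' → ∃ u ∈ φ w, ∃ v ∈ φ w', G.Adj u v)

namespace SimpleGraph

section Reachable

variable {α β : Type*} {G : SimpleGraph α} {G' : SimpleGraph β}

lemma Reachable.lift (f : α → β) (hf : ∀ ⦃a b⦄, G.Adj a b → G'.Reachable (f a) (f b))
    {a b : α} (h : G.Reachable a b) : G'.Reachable (f a) (f b) := by
  obtain ⟨p⟩ := h
  induction p with
  | nil => exact Reachable.refl _
  | cons hadj _ ih => exact (hf hadj).trans ih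

lemma Connected.lift (hG : G.Connected) (f : α → β)
    (hf : ∀ ⦃a b⦄, G.Adj a b → G'.Reachable (f a) (f b))
    (hcover : ∀ b, ∃ a, G'.Reachable (f a) b) : G'.Connected := by
  have : Nonempty β := hG.nonempty.map f
  refine ⟨fun u v => ?_⟩
  obtain ⟨a, ha⟩ := hcover u
  obtain ⟨b, hb⟩ := hcover v
  exact ha.symm.trans (((hG.preconnected a b).lift f hf).trans hb)

end Reachable

lemma induce_singleton_connected {V : Type*} {G : SimpleGraph V} (v : V) :
    (G.induce {v}).Connected := by
  rw [induce_singleton_eq_top]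
  exact connected_top

structure MinorModel {V W : Type*} (G : SimpleGraph V) (H : SimpleGraph W) where
  branch : W → Set V
  connected : ∀ w, (G.induce (branch w)).Connected
  disjoint : Pairwise fun w w' => Disjoint (branch w) (branch w')
  adj : ∀ ⦃w w'⦄, H.Adj w w' → ∃ u ∈ branch w, ∃ v ∈ branch w', G.Adj u v

namespace MinorModel

variable {U V W : Type*} {G : SimpleGraph V} {G' : SimpleGraph U} {H : SimpleGraph W}

lemma branch_nonempty (M : MinorModel G H) (w : W) : (M.branch w).Nonempty :=
  Set.nonempty_coe_sort.mp (M.connected w).nonempty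

def ofCopy (f : Copy H G) : MinorModel G H where
  branch w := {f w}
  connected _ := induce_singleton_connected _
  disjoint _ _ h := Set.disjoint_singleton.mpr (f.injective.ne h)
  adj _ _ h := ⟨_, rfl, _, rfl, f.toHom.map_adj h⟩

def trans (M : MinorModel G G') (N : MinorModel G' H) : MinorModel G H where
  branch w := ⋃ a ∈ N.branch w, M.branch a
  connected w := by
    set U := ⋃ a ∈ N.branch w, M.branch a
    have hsub : ∀ a ∈ N.branch w, M.branch a ⊆ U := fun a ha => Set.subset_biUnion_of_mem ha
    have hreach : ∀ a (ha : a ∈ N.branch w) u v (hu : u ∈ M.branch a) (hv : v ∈ M.branch a),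
        (G.induce U).Reachable ⟨u, hsub a ha hu⟩ ⟨v, hsub a ha hv⟩ := fun a ha u v hu hv =>
      ((M.connected a).preconnected ⟨u, hu⟩ ⟨v, hv⟩).map (G.induceHomOfLE (hsub a ha)).toHom
    choose p hp using M.branch_nonempty
    refine (N.connected w).lift (fun a => ⟨p a, hsub a a.2 (hp a)⟩) ?_ ?_
    · rintro ⟨a, ha⟩ ⟨b, hb⟩ hab
      obtain ⟨u, hu, v, hv, huv⟩ := M.adj hab
      have hedge : (G.induce U).Adj ⟨u, hsub a ha hu⟩ ⟨v, hsub b hb hv⟩ := huv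
      exact (hreach a ha _ _ (hp a) hu).trans (hedge.reachable.trans (hreach b hb _ _ hv (hp b)))
    · rintro ⟨u, hu⟩
      obtain ⟨a, ha, hua⟩ := Set.mem_iUnion₂.mp hu
      exact ⟨⟨a, ha⟩, hreach a ha _ _ (hp a) hua⟩
  disjoint w w' h := by
    simp only [Set.disjoint_iUnion₂_left, Set.disjoint_iUnion₂_right]
    exact fun b hb a ha => M.disjoint ((N.disjoint h).ne_of_mem ha hb)
  adj w w' h := by
    obtain ⟨a, ha, b, hb, hab⟩ := N.adj h
    obtain ⟨u, hu, v, hv, huv⟩ := M.adj hab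
    exact ⟨u, Set.mem_biUnion ha hu, v, Set.mem_biUnion hb hv, huv⟩

lemma hasMinor (M : MinorModel G H) : HasMinor G H :=
  ⟨M.branch, M.branch_nonempty, M.connected, fun _ _ h => M.disjoint h, fun _ _ h => M.adj h⟩

end MinorModel

lemma hasMinor_iff_nonempty_minorModel {V W : Type*} {G : SimpleGraph V} {H : SimpleGraph W} :
    HasMinor G H ↔ Nonempty (MinorModel G H) :=
  ⟨fun ⟨φ, _, hconn, hdisj, hadj⟩ => ⟨⟨φ, hconn, hdisj, hadj⟩⟩, fun ⟨M⟩ => M.hasMinor⟩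

end SimpleGraph

open SimpleGraph

lemma HasMinor.trans {U V W : Type*} {G : SimpleGraph V} {G' : SimpleGraph U}
    {H : SimpleGraph W} (h : HasMinor G G') (h' : HasMinor G' H) : HasMinor G H := by
  rw [hasMinor_iff_nonempty_minorModel] at h h'
  obtain ⟨M⟩ := h
  obtain ⟨N⟩ := h'
  exact (M.trans N).hasMinor

namespace SimpleGraph

section Contraction

variable {V : Type*} {G : SimpleGraph V} {x y : V}

/-- Contraction of the edge `xy`: the vertex `x` of the result stands for the merged vertex. -/
def contractEdge (G : SimpleGraph V) (x y : V) : SimpleGraph ({y}ᶜ : Set V) :=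
  G.induce {y}ᶜ ⊔ fromRel fun a b => a.1 = x ∧ G.Adj y b

def MinorModel.contractEdge (hxy : G.Adj x y) : MinorModel G (G.contractEdge x y) where
  branch a := insert a.1 {v | a.1 = x ∧ v = y}
  connected a := by
    by_cases hax : a.1 = x
    · have hpair : insert a.1 {v | a.1 = x ∧ v = y} = {x, y} := by ext; simp [hax]
      rw [hpair]
      exact induce_pair_connected_of_adj hxy
    · have hsingle : insert a.1 {v | a.1 = x ∧ v = y} = {a.1} := by ext; simp [hax]
      rw [hsingle]
      exact induce_singleton_connected _
  disjoint a b hab := by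
    have hab' : a.1 ≠ b.1 := fun h => hab (Subtype.ext h)
    have ha : a.1 ≠ y := a.2
    have hb : b.1 ≠ y := b.2
    refine Set.disjoint_left.mpr fun v hva hvb => ?_
    simp only [Set.mem_insert_iff, Set.mem_ofPred_eq] at hva hvb
    grind
  adj a b hab := by
    rcases hab with hab | ⟨-, ⟨hax, hyb⟩ | ⟨hbx, hya⟩⟩
    · exact ⟨a, Set.mem_insert _ _, b, Set.mem_insert _ _, hab⟩
    · exact ⟨y, Set.mem_insert_of_mem _ ⟨hax, rfl⟩, b, Set.mem_insert _ _, hyb⟩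
    · exact ⟨a, Set.mem_insert _ _, y, Set.mem_insert_of_mem _ ⟨hbx, rfl⟩, hya.symm⟩

lemma hasMinor_contractEdge (hxy : G.Adj x y) : HasMinor G (G.contractEdge x y) :=
  (MinorModel.contractEdge hxy).hasMinor

lemma ncard_edgeSet_le_contractEdge [Fintype V] (hxy : G.Adj x y) :
    G.edgeSet.ncard ≤
      (G.contractEdge x y).edgeSet.ncard + (G.neighborSet x ∩ G.neighborSet y).ncard + 1 := by
  classical
  -- Deleting `y` loses `deg y` edges; those to `N(y) \ N[x]` come back as new edges at `x`.
  set x' : ({y}ᶜ : Set V) := ⟨x, hxy.ne⟩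
  set R := G.neighborSet y \ insert x (G.neighborSet x)
  have hdelete : (G.induce {y}ᶜ).edgeSet.ncard + G.degree y = G.edgeSet.ncard := by
    have h1 := G.card_edgeFinset_induce_compl_singleton y
    have h2 := G.card_edgeFinset_deleteIncidenceSet y
    have h3 := G.degree_le_card_edgeFinset y
    rw [← coe_edgeFinset, ← coe_edgeFinset, Set.ncard_coe_finset, Set.ncard_coe_finset]
    omega
  have hdegree : G.degree y ≤ (G.neighborSet x ∩ G.neighborSet y).ncard + 1 + R.ncard := by
    rw [← card_neighborFinset_eq_degree, ← Set.ncard_coe_finset, coe_neighborFinset,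
      ← Set.ncard_inter_add_ncard_sdiff_eq_ncard _ (insert x (G.neighborSet x))]
    gcongr
    calc (G.neighborSet y ∩ insert x (G.neighborSet x)).ncard
        ≤ (insert x (G.neighborSet x ∩ G.neighborSet y)).ncard := by
          apply Set.ncard_le_ncard _ (Set.toFinite _)
          rintro v ⟨hyv, rfl | hxv⟩
          exacts [Set.mem_insert _ _, Set.mem_insert_of_mem _ ⟨hxv, hyv⟩]
      _ ≤ _ := Set.ncard_insert_le _ _
  have hnew : (G.induce {y}ᶜ).edgeSet.ncard + R.ncard ≤ (G.contractEdge x y).edgeSet.ncard := by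
    have hR : (Subtype.val ⁻¹' R : Set ({y}ᶜ : Set V)).ncard = R.ncard :=
      Set.ncard_preimage_of_injective_subset_range Subtype.val_injective (by
        rintro v ⟨hyv, -⟩
        exact ⟨⟨v, (G.ne_of_adj hyv).symm⟩, rfl⟩)
    rw [← hR, ← Set.ncard_image_of_injective _ (Sym2.mkEmbedding x').injective,
      ← Set.ncard_union_eq]
    · refine Set.ncard_le_ncard (Set.union_subset (edgeSet_mono le_sup_left) ?_) (Set.toFinite _)
      rintro _ ⟨b, ⟨hyb, hb⟩, rfl⟩
      refine Or.inr ⟨fun h => hb ?_, Or.inl ⟨rfl, hyb⟩⟩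
      rw [← show x' = b from h]
      exact Set.mem_insert _ _
    · refine Set.disjoint_left.mpr ?_
      rintro _ he ⟨b, ⟨-, hb⟩, rfl⟩
      exact hb (Set.mem_insert_of_mem _ he)
  omega

end Contraction

section CompleteBipartite

variable {V β : Type*} {G : SimpleGraph V}

lemma hasMinor_completeBipartiteGraph_fin_zero [Fintype V] {t : ℕ} (ht : t ≤ Fintype.card V) :
    HasMinor G (completeBipartiteGraph (Fin 0) (Fin t)) := by
  have hbot : completeBipartiteGraph (Fin 0) (Fin t) = ⊥ := by
    ext (i | j) (i' | j') <;> simp <;> exact Fin.elim0 ‹_›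
  have hcopy : completeBipartiteGraph (Fin 0) (Fin t) ⊑ G := by
    rw [hbot, bot_isContained_iff_card_le]
    simpa using ht
  exact (MinorModel.ofCopy hcopy.some).hasMinor

lemma MinorModel.hasMinor_cone {s : ℕ} (M : MinorModel G (completeBipartiteGraph (Fin s) β))
    {x : V} (hM : ∀ w, M.branch w ⊆ G.neighborSet x) :
    HasMinor G (completeBipartiteGraph (Fin (s + 1)) β) := by
  set branch : Fin (s + 1) ⊕ β → Set V :=
    Sum.elim (Fin.cons {x} fun i => M.branch (.inl i)) fun j => M.branch (.inr j)
  have hx : ∀ w, Disjoint {x} (M.branch w) :=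
    fun w => Set.disjoint_singleton_left.mpr fun h => G.irrefl (hM w h)
  have hadj : ∀ i j, ∃ u ∈ branch (.inl i), ∃ v ∈ branch (.inr j), G.Adj u v := by
    intro i j
    cases i using Fin.cases with
    | zero =>
      obtain ⟨v, hv⟩ := M.branch_nonempty (.inr j)
      exact ⟨x, rfl, v, hv, hM _ hv⟩
    | succ i => exact M.adj (by simp)
  refine MinorModel.hasMinor ⟨branch, ?_, ?_, ?_⟩
  · rintro (i | j)
    · cases i using Fin.cases with
      | zero => exact induce_singleton_connected x
      | succ i => exact M.connected _
    · exact M.connected _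
  · rintro (i | j) (i' | j') h
    · cases i using Fin.cases <;> cases i' using Fin.cases
      · exact absurd rfl h
      · exact hx _
      · exact (hx _).symm
      · exact M.disjoint (by simpa using h)
    · cases i using Fin.cases
      · exact hx _
      · exact M.disjoint (by simp)
    · cases i' using Fin.cases
      · exact (hx _).symm
      · exact M.disjoint (by simp)
    · exact M.disjoint (by simpa using h)
  · rintro (i | j) (i' | j') h
    · simp at h
    · exact hadj i j'
    · obtain ⟨u, hu, v, hv, huv⟩ := hadj i' j
      exact ⟨v, hv, u, hu, huv.symm⟩
    · simp at h

end CompleteBipartite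

section EdgeCounting

variable {V : Type*} {G : SimpleGraph V}

lemma ncard_neighborSet_induce (s : Set V) (v : s) :
    ((G.induce s).neighborSet v).ncard = (s ∩ G.neighborSet v).ncard := by
  rw [neighborSet_induce, ← Set.ncard_image_of_injective _ Subtype.val_injective,
    Subtype.image_preimage_coe]

lemma mul_card_le_two_mul_ncard_edgeSet [Fintype V] {k : ℕ}
    (h : ∀ v, k ≤ (G.neighborSet v).ncard) : k * Fintype.card V ≤ 2 * G.edgeSet.ncard := by
  classical
  rw [← coe_edgeFinset, Set.ncard_coe_finset, ← sum_degrees_eq_twice_card_edges,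
    mul_comm, ← smul_eq_mul, ← Finset.card_univ, ← Finset.sum_const]
  refine Finset.sum_le_sum fun v _ => ?_
  rw [← card_neighborFinset_eq_degree, ← Set.ncard_coe_finset, coe_neighborFinset]
  exact h v

lemma le_card_of_two_mul_mul_card_le [Fintype V] [Nonempty V] {t : ℕ}
    (h : 2 * t * Fintype.card V ≤ G.edgeSet.ncard) : t ≤ Fintype.card V := by
  classical
  have hpos := Fintype.card_pos (α := V)
  have hedges : G.edgeSet.ncard ≤ Fintype.card V ^ 2 := by
    rw [← coe_edgeFinset, Set.ncard_coe_finset]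
    exact card_edgeFinset_le_card_choose_two.trans (Nat.choose_le_pow _ _)
  nlinarith

end EdgeCounting

universe u

lemma hasMinor_completeBipartiteGraph_succ_of_common_neighbors {V : Type u} [Fintype V]
    {G : SimpleGraph V} {s t : ℕ}
    (ih : ∀ {W : Type u} [Fintype W] [Nonempty W] (H : SimpleGraph W),
      2 ^ (s + 1) * t * Fintype.card W ≤ H.edgeSet.ncard →
      HasMinor H (completeBipartiteGraph (Fin s) (Fin t)))
    {x y : V} (hxy : G.Adj x y)
    (hcommon : ∀ v, G.Adj x v → 2 ^ (s + 2) * t ≤ (G.neighborSet x ∩ G.neighborSet v).ncard) :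
    HasMinor G (completeBipartiteGraph (Fin (s + 1)) (Fin t)) := by
  classical
  set A := G.neighborSet x
  have : Nonempty A := ⟨⟨y, hxy⟩⟩
  have hedges : 2 ^ (s + 2) * t * Fintype.card A ≤ 2 * (G.induce A).edgeSet.ncard :=
    mul_card_le_two_mul_ncard_edgeSet fun v => (ncard_neighborSet_induce A v).symm ▸ hcommon v v.2
  obtain ⟨N⟩ := hasMinor_iff_nonempty_minorModel.mp <| ih (G.induce A) <| by
    rw [pow_succ] at hedges
    linarith
  exact ((MinorModel.ofCopy (Copy.induce G A)).trans N).hasMinor_cone fun w =>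
    Set.iUnion₂_subset fun a _ => Set.singleton_subset_iff.mpr a.2

lemma hasMinor_completeBipartiteGraph_succ {s t : ℕ} (ht : 1 ≤ t)
    (ih : ∀ {W : Type u} [Fintype W] [Nonempty W] (H : SimpleGraph W),
      2 ^ (s + 1) * t * Fintype.card W ≤ H.edgeSet.ncard →
      HasMinor H (completeBipartiteGraph (Fin s) (Fin t)))
    {V : Type u} [Fintype V] [Nonempty V] (G : SimpleGraph V)
    (h : 2 ^ (s + 2) * t * Fintype.card V ≤ G.edgeSet.ncard) :
    HasMinor G (completeBipartiteGraph (Fin (s + 1)) (Fin t)) := by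
  induction hn : Fintype.card V using Nat.strong_induction_on generalizing V with
  | _ n ihn =>
  classical
  have hpos : 0 < n := hn ▸ Fintype.card_pos
  obtain ⟨x, y, hxy⟩ : ∃ x y, G.Adj x y := by
    rw [← ne_bot_iff_exists_adj, ← edgeSet_nonempty]
    refine Set.nonempty_of_ncard_ne_zero (Nat.pos_iff_ne_zero.mp (lt_of_lt_of_le ?_ h))
    rw [hn]
    positivity
  by_cases hsparse :
      ∃ a b, G.Adj a b ∧ (G.neighborSet a ∩ G.neighborSet b).ncard < 2 ^ (s + 2) * t
  · obtain ⟨a, b, hab, hlt⟩ := hsparse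
    have : Nonempty ({b}ᶜ : Set V) := ⟨⟨a, hab.ne⟩⟩
    have hcard : Fintype.card ({b}ᶜ : Set V) = n - 1 := by
      rw [Fintype.card_compl_set, Set.card_singleton, hn]
    have hcontract := ncard_edgeSet_le_contractEdge hab
    refine (hasMinor_contractEdge hab).trans
      (ihn (n - 1) (by omega) (G.contractEdge a b) ?_ hcard)
    rw [hcard, Nat.mul_sub_one]
    rw [hn] at h
    omega
  · push Not at hsparse
    exact hasMinor_completeBipartiteGraph_succ_of_common_neighbors ih hxy fun v => hsparse x v

end SimpleGraph

theorem stmt_8_general {V : Type*} [Fintype V] [Nonempty V] (G : SimpleGraph V)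
    (s t : ℕ) (ht : 1 ≤ t)
    (h : 2 ^ (s + 1) * t * Fintype.card V ≤ G.edgeSet.ncard) :
    HasMinor G (completeBipartiteGraph (Fin s) (Fin t)) := by
  induction s generalizing V with
  | zero =>
    exact hasMinor_completeBipartiteGraph_fin_zero
      (le_card_of_two_mul_mul_card_le (by simpa using h))
  | succ s ih => exact hasMinor_completeBipartiteGraph_succ ht ih G h

/-- Every non-empty graph `G` with at least `2^(s+1) · t · |V(G)|` edges has a
`K_{s,t}`-minor. -/
theorem stmt_8 {V : Type*} [Fintype V] [Nonempty V] (G : SimpleGraph V)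
    (s t : ℕ) (hs : 1 ≤ s) (ht : 1 ≤ t)
    (h : 2 ^ (s + 1) * t * Fintype.card V ≤ G.edgeSet.ncard) :
    HasMinor G (completeBipartiteGraph (Fin s) (Fin t)) :=
  stmt_8_general G s t ht h
end

section
/- Let G be a graph whose vertex set V_2 is ordered w_1, ..., w_p so that each w_i has at most D - 1 earlier neighbours, let q ≥ 1, and let (L,M) be a cover of G with |L(w_i)| ≥ D·q for all i. Then there exist subsets L'(w_i) ⊆ L(w_i) with |L'(w_i)| = q for all i, such that for every edge w_i w_j of G, no colour of L'(w_i) is matched by M_{w_i w_j} to a colour of L'(w_j). -/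
/-!
Greedy choice along the vertex order. When `w` is reached, each of its at most `D - 1` earlier
neighbours `u` already holds `q` colours, and since `M w u` is a matching these block at most
`q` colours of `L w`. So at least `D q - (D - 1) q = q` colours of `L w` remain free.
-/

namespace Cover

variable {V : Type*} {G : SimpleGraph V} (C : Cover G)

open Classical in
/-- `L u ∩ N_{(L,M)}(S)` in the paper's notation, for `S ⊆ L v` and the edge `uv`. -/
noncomputable def matchedTo (u v : V) (S : Finset ℕ) : Finset ℕ :=
  {a ∈ C.L u | ∃ b ∈ S, C.M u v a b}

variable {C}

theorem mem_matchedTo_of_M {u v : V} {S : Finset ℕ} {a b : ℕ} (hab : C.M u v a b)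
    (hb : b ∈ S) : a ∈ C.matchedTo u v S := by
  simp only [matchedTo, Finset.mem_filter]
  exact ⟨(C.mem u v a b hab).1, b, hb, hab⟩

theorem card_matchedTo_le (u v : V) (S : Finset ℕ) : (C.matchedTo u v S).card ≤ S.card := by
  refine Finset.card_le_card_of_forall_subsingleton (C.M u v) ?_ ?_
  · intro a ha
    simp only [matchedTo, Finset.mem_filter] at ha
    exact ha.2
  · intro b _ a ha a' ha'
    exact C.matching_left u v a a' b ha.2 ha'.2

def IsSeparatedOn (q : ℕ) (L' : V → Finset ℕ) (s : Finset V) : Prop :=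
  (∀ i ∈ s, L' i ⊆ C.L i ∧ (L' i).card = q) ∧
    ∀ i ∈ s, ∀ j ∈ s, G.Adj i j → ∀ a ∈ L' i, ∀ b ∈ L' j, ¬ C.M i j a b

variable {q : ℕ} {L' : V → Finset ℕ} {s : Finset V} {w : V}

theorem isSeparatedOn_empty : C.IsSeparatedOn q L' ∅ := by
  simp [IsSeparatedOn]

theorem IsSeparatedOn.update_insert [DecidableEq V] (hsep : C.IsSeparatedOn q L' s)
    {T : Finset ℕ} (hTL : T ⊆ C.L w) (hTq : T.card = q)
    (hT : ∀ u ∈ s, G.Adj w u → Disjoint T (C.matchedTo w u (L' u))) :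
    C.IsSeparatedOn q (Function.update L' w T) (insert w s) := by
  have hold : ∀ i ∈ insert w s, i ≠ w → i ∈ s ∧ Function.update L' w T i = L' i :=
    fun i hi hiw => ⟨Finset.mem_of_mem_insert_of_ne hi hiw, Function.update_of_ne hiw _ _⟩
  have hnew : ∀ u ∈ insert w s, u ≠ w → G.Adj w u →
      ∀ a ∈ T, ∀ b ∈ L' u, ¬ C.M w u a b := by
    intro u hu huw hadj a ha b hb hab
    exact Finset.disjoint_left.mp (hT u (hold u hu huw).1 hadj) ha (mem_matchedTo_of_M hab hb)
  refine ⟨fun i hi => ?_, fun i hi j hj hadj => ?_⟩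
  · rcases eq_or_ne i w with rfl | hiw
    · simpa using ⟨hTL, hTq⟩
    · rw [(hold i hi hiw).2]
      exact hsep.1 i (hold i hi hiw).1
  · by_cases hiw : i = w <;> by_cases hjw : j = w
    · subst hiw hjw
      exact (G.irrefl hadj).elim
    · subst hiw
      rw [Function.update_self, (hold j hj hjw).2]
      exact hnew j hj hjw hadj
    · subst hjw
      rw [Function.update_self, (hold i hi hiw).2]
      exact fun a ha b hb hab => hnew i hi hiw hadj.symm b hb a ha (C.symm _ _ _ _ hab)
    · rw [(hold i hi hiw).2, (hold j hj hjw).2]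
      exact hsep.2 i (hold i hi hiw).1 j (hold j hj hjw).1 hadj

theorem IsSeparatedOn.exists_insert [DecidableEq V] [DecidableRel G.Adj]
    (hsep : C.IsSeparatedOn q L' s)
    (hL : {u ∈ s | G.Adj w u}.card * q + q ≤ (C.L w).card) :
    ∃ L'', C.IsSeparatedOn q L'' (insert w s) := by
  set N := {u ∈ s | G.Adj w u}
  set F := N.biUnion fun u => C.matchedTo w u (L' u)
  have hF : F.card ≤ N.card * q :=
    calc F.card ≤ ∑ u ∈ N, (C.matchedTo w u (L' u)).card := Finset.card_biUnion_le
      _ ≤ ∑ _u ∈ N, q := Finset.sum_le_sum fun u hu => by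
          rw [← (hsep.1 u (Finset.mem_filter.mp hu).1).2]
          exact card_matchedTo_le w u (L' u)
      _ = N.card * q := by rw [Finset.sum_const, smul_eq_mul]
  have hfree : q ≤ (C.L w \ F).card := by
    have := Finset.le_card_sdiff F (C.L w)
    omega
  obtain ⟨T, hTsub, hTq⟩ := Finset.exists_subset_card_eq hfree
  refine ⟨_, hsep.update_insert (hTsub.trans Finset.sdiff_subset) hTq fun u hu hadj => ?_⟩
  refine Finset.disjoint_of_subset_left hTsub (Finset.sdiff_disjoint.mono_right ?_)
  exact Finset.subset_biUnion_of_mem (fun u => C.matchedTo w u (L' u))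
    (Finset.mem_filter.mpr ⟨hu, hadj⟩)

theorem exists_isSeparatedOn_univ [LinearOrder V] [Fintype V] {D : ℕ} (hD : 1 ≤ D)
    (hord : ∀ v : V, {u | G.Adj v u ∧ u < v}.ncard ≤ D - 1)
    (hL : ∀ v, D * q ≤ (C.L v).card) :
    ∃ L', C.IsSeparatedOn q L' Finset.univ := by
  classical
  refine Finset.induction_on_max Finset.univ ⟨fun _ => ∅, isSeparatedOn_empty⟩ ?_
  rintro w s hlt ⟨L', hsep⟩
  refine hsep.exists_insert ?_
  have hdeg : {u ∈ s | G.Adj w u}.card ≤ D - 1 := by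
    rw [← Set.ncard_coe_finset]
    refine le_trans (Set.ncard_le_ncard ?_ (Set.toFinite _)) (hord w)
    intro u hu
    simp only [Finset.coe_filter, Set.mem_ofPred_eq] at hu
    exact ⟨hu.2, hlt u hu.1⟩
  calc {u ∈ s | G.Adj w u}.card * q + q ≤ (D - 1) * q + q := by gcongr
    _ = D * q := by rw [Nat.sub_one_mul, Nat.sub_add_cancel (Nat.le_mul_of_pos_left q hD)]
    _ ≤ (C.L w).card := hL w

end Cover

theorem stmt_12_general {p : ℕ} (G : SimpleGraph (Fin p)) (C : Cover G) (D q : ℕ)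
    (hD : 1 ≤ D)
    (hord : ∀ i : Fin p, {j : Fin p | G.Adj i j ∧ j < i}.ncard ≤ D - 1)
    (hL : ∀ i, D * q ≤ (C.L i).card) :
    ∃ L' : Fin p → Finset ℕ,
      (∀ i, L' i ⊆ C.L i ∧ (L' i).card = q) ∧
      ∀ i j, G.Adj i j → ∀ a ∈ L' i, ∀ b ∈ L' j, ¬ C.M i j a b := by
  obtain ⟨L', hsep⟩ := C.exists_isSeparatedOn_univ hD hord hL
  exact ⟨L', fun i => hsep.1 i (Finset.mem_univ i),
    fun i j => hsep.2 i (Finset.mem_univ i) j (Finset.mem_univ j)⟩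

/-- Let `G` be a graph on vertices `w_0, …, w_{p-1}` such that each `w_i` has at most
`D - 1` earlier neighbours, let `q ≥ 1`, and let `(L, M)` be a cover of `G` with
`|L(w_i)| ≥ D·q` for all `i`. Then there are subsets `L'(w_i) ⊆ L(w_i)` of size `q`
such that for every edge `w_i w_j`, no colour of `L'(w_i)` is matched by the matching
of that edge to a colour of `L'(w_j)`. -/
theorem stmt_12 {p : ℕ} (G : SimpleGraph (Fin p)) (C : Cover G) (D q : ℕ)
    (hD : 1 ≤ D) (hq : 1 ≤ q)
    (hord : ∀ i : Fin p, {j : Fin p | G.Adj i j ∧ j < i}.ncard ≤ D - 1)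
    (hL : ∀ i, D * q ≤ (C.L i).card) :
    ∃ L' : Fin p → Finset ℕ,
      (∀ i, L' i ⊆ C.L i ∧ (L' i).card = q) ∧
      ∀ i j, G.Adj i j → ∀ a ∈ L' i, ∀ b ∈ L' j, ¬ C.M i j a b :=
  stmt_12_general G C D q hD hord hL
end
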